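/- arXiv:1807.02055 — 7 statements merged into one kernel-verified Lean document; each statement's English description precedes it below -/
import Mathlib

section
/- Let G be an abelian group of order v and let D = {D_1, ..., D_b} be a collection of mutually disjoint k-subsets of G whose union is a (v, bk, λ') difference set in G for some integer λ' > λ. Then D is a (v,k,λ) disjoint difference family in G if and only if D is a (v,k,λ'-λ) external difference family in G. -/
/-! For `x ≠ 0` the difference multiset of a disjoint union `⋃ D i` splits into the internal
differences `ΔD i` and the external differences `D i - D j` with `i ≠ j`, so the internal and
external counts of `x` add up to `λ'`. -/

open Finset

/-- Multiplicity of `x` in the internal difference multiset `ΔA`. -/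
def diffCount {G : Type*} [AddCommGroup G] [DecidableEq G] (A : Finset G) (x : G) : ℕ :=
  ((A ×ˢ A).filter (fun q => q.1 ≠ q.2 ∧ q.1 - q.2 = x)).card

/-- Multiplicity of `x` in the external difference multiset `A - B` (for disjoint `A, B`). -/
def extDiffCount {G : Type*} [AddCommGroup G] [DecidableEq G] (A B : Finset G) (x : G) : ℕ :=
  ((A ×ˢ B).filter (fun q => q.1 - q.2 = x)).card

theorem Finset.sum_sum_eq_sum_diag_add_sum_sum_ne {ι M : Type*} [Fintype ι] [DecidableEq ι]
    [AddCommMonoid M] (f : ι → ι → M) :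
    ∑ i, ∑ j, f i j = ∑ i, f i i + ∑ i, ∑ j, (if i ≠ j then f i j else 0) := by
  rw [← sum_add_distrib]
  refine sum_congr rfl fun i _ => ?_
  calc ∑ j, f i j = ∑ j, ((if i = j then f i j else 0) + if i ≠ j then f i j else 0) :=
        sum_congr rfl fun j _ => by by_cases h : i = j <;> simp [h]
    _ = f i i + ∑ j, (if i ≠ j then f i j else 0) := by
        rw [sum_add_distrib, Fintype.sum_ite_eq]

section DifferenceCounts

variable {G : Type*} [AddCommGroup G] [DecidableEq G]

theorem diffCount_eq_extDiffCount_self (A : Finset G) {x : G} (hx : x ≠ 0) :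
    diffCount A x = extDiffCount A A x := by
  refine congrArg card (filter_congr fun q _ => and_iff_right_of_imp fun h heq => hx ?_)
  rw [← h, heq, sub_self]

theorem extDiffCount_eq_sum (A B : Finset G) (x : G) :
    extDiffCount A B x = ∑ a ∈ A, ∑ c ∈ B, if a - c = x then 1 else 0 := by
  rw [extDiffCount, card_filter, sum_product]

variable {ι : Type*} {s : Finset ι} {D : ι → Finset G}

theorem extDiffCount_biUnion_left (hD : (s : Set ι).PairwiseDisjoint D) (B : Finset G) (x : G) :
    extDiffCount (s.biUnion D) B x = ∑ i ∈ s, extDiffCount (D i) B x := by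
  simp only [extDiffCount_eq_sum, sum_biUnion hD]

theorem extDiffCount_biUnion_right (hD : (s : Set ι).PairwiseDisjoint D) (A : Finset G) (x : G) :
    extDiffCount A (s.biUnion D) x = ∑ j ∈ s, extDiffCount A (D j) x := by
  simp only [extDiffCount_eq_sum, sum_biUnion hD]
  exact sum_comm

theorem diffCount_biUnion (hD : (s : Set ι).PairwiseDisjoint D) {x : G} (hx : x ≠ 0) :
    diffCount (s.biUnion D) x = ∑ i ∈ s, ∑ j ∈ s, extDiffCount (D i) (D j) x := by
  simp only [diffCount_eq_extDiffCount_self _ hx, extDiffCount_biUnion_left hD,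
    extDiffCount_biUnion_right hD]

theorem diffCount_biUnion_eq_add [Fintype ι] [DecidableEq ι]
    (hD : (Set.univ : Set ι).PairwiseDisjoint D) {x : G} (hx : x ≠ 0) :
    diffCount (univ.biUnion D) x = ∑ i, diffCount (D i) x
      + ∑ i, ∑ j, (if i ≠ j then extDiffCount (D i) (D j) x else 0) := by
  rw [diffCount_biUnion (by simpa using hD) hx, sum_sum_eq_sum_diag_add_sum_sum_ne]
  simp only [diffCount_eq_extDiffCount_self _ hx]

end DifferenceCounts

theorem stmt0_general {G : Type*} [AddCommGroup G] [DecidableEq G]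
    (b lam lam' : ℕ)
    (D : Fin b → Finset G)
    (hdisj : ∀ i j, i ≠ j → Disjoint (D i) (D j))
    (hlt : lam < lam')
    (hds : ∀ x : G, x ≠ 0 → diffCount (Finset.univ.biUnion D) x = lam') :
    (∀ x : G, x ≠ 0 → ∑ i : Fin b, diffCount (D i) x = lam) ↔
    (∀ x : G, x ≠ 0 →
      ∑ i : Fin b, ∑ j : Fin b, (if i ≠ j then extDiffCount (D i) (D j) x else 0)
        = lam' - lam) := by
  refine forall₂_congr fun x hx => ?_
  have hsplit : lam' = _ :=
    (hds x hx).symm.trans (diffCount_biUnion_eq_add (fun i _ j _ hij => hdisj i j hij) hx)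
  omega

/-- If the mutually disjoint `k`-subsets `D 0, …, D (b-1)` of an abelian group `G`
of order `v` have union forming a `(v, b*k, λ')` difference set with `λ' > λ`, then they form a
`(v,k,λ)` disjoint difference family iff they form a `(v,k,λ'-λ)` external difference family. -/
theorem stmt0 {G : Type*} [AddCommGroup G] [Fintype G] [DecidableEq G]
    (v b k lam lam' : ℕ) (hv : Fintype.card G = v)
    (D : Fin b → Finset G)
    (hk : ∀ i, (D i).card = k)
    (hdisj : ∀ i j, i ≠ j → Disjoint (D i) (D j))
    (hcard : (Finset.univ.biUnion D).card = b * k)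
    (hlt : lam < lam')
    (hds : ∀ x : G, x ≠ 0 → diffCount (Finset.univ.biUnion D) x = lam') :
    (∀ x : G, x ≠ 0 → ∑ i : Fin b, diffCount (D i) x = lam) ↔
    (∀ x : G, x ≠ 0 →
      ∑ i : Fin b, ∑ j : Fin b, (if i ≠ j then extDiffCount (D i) (D j) x else 0)
        = lam' - lam) :=
  stmt0_general b lam lam' D hdisj hlt hds
end

section
/- Let p be a prime and r ≥ 1, and set q = p^{2r}, e = p^r + 1, so f = (q-1)/e = p^r - 1. Then the cyclotomic numbers of order e in F_q are: (0,0)_e = p^r - 2; (0,i)_e = (i,0)_e = (i,i)_e = 0 for i ≠ 0; and (i,j)_e = 1 for distinct nonzero i, j. -/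
open Finset

open scoped Classical in
/-- The coset `C i = {α^t : t ≡ i (mod e)}` of the subgroup of `e`-th powers in `F^*`. -/
noncomputable def cyclotomicCoset {F : Type*} [Field F] [Fintype F]
    (α : Fˣ) (e i : ℕ) : Finset F :=
  Finset.univ.filter (fun x => ∃ t : ℕ, x = (α : F) ^ t ∧ t % e = i)

open scoped Classical in
/-- The cyclotomic number `(i,j)_e = |(C_i + 1) ∩ C_j|`. -/
noncomputable def cyclotomicNumber {F : Type*} [Field F] [Fintype F]
    (α : Fˣ) (e i j : ℕ) : ℕ :=
  ((cyclotomicCoset α e i).filter (fun x => x + 1 ∈ cyclotomicCoset α e j)).card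

/-!
Let `Q = p^r`. The fixed field `K` of `x ↦ x^Q` has `Q` elements and `K^* = C_0`, so the cosets
are `C_i = α^i K^*`: the punctured `K`-lines through `0` of the plane `F ≅ K²`. With `a = α^i`,
`b = α^j`, a solution `x = a c`, `x + 1 = b d` (`c, d ∈ K^*`) gives `1 = b d - a c`. If it exists,
`a ∈ K ↔ b ∈ K`, and `a = b` forces `a ∈ K`; this kills `(0,i)`, `(i,0)` and `(i,i)`. If `a`, `b`
and `b / a` all lie outside `K`, then `{1, b / a}` is a `K`-basis of `F`, so `(c, d)` exists and
is unique. Finally `(0,0)` counts the `x ∈ K^*` with `x ≠ -1`.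
-/

open Function

section Cosets

variable {F : Type*} [Field F] [Fintype F] {α : Fˣ} {e f i : ℕ}

theorem cyclotomicCoset_eq_image [DecidableEq F] (hα : orderOf α = e * f) (hi : i < e) :
    cyclotomicCoset α e i = (range f).image fun k => (α : F) ^ (i + e * k) := by
  ext x
  simp only [cyclotomicCoset, mem_filter, mem_univ, true_and, mem_image, mem_range]
  constructor
  · rintro ⟨t, rfl, ht⟩
    have hs : t % (e * f) % e = i := by rw [Nat.mod_mod_of_dvd t (dvd_mul_right e f), ht]
    refine ⟨t % (e * f) / e, Nat.div_lt_of_lt_mul (Nat.mod_lt t ?_), ?_⟩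
    · rw [← hα]; exact orderOf_pos α
    · rw [← hs, Nat.mod_add_div, ← Units.val_pow_eq_pow_val, ← Units.val_pow_eq_pow_val, ← hα,
        pow_mod_orderOf]
  · rintro ⟨k, -, rfl⟩
    exact ⟨i + e * k, rfl, by rw [Nat.add_mul_mod_self_left, Nat.mod_eq_of_lt hi]⟩

theorem card_cyclotomicCoset (hα : orderOf α = e * f) (hi : i < e) :
    #(cyclotomicCoset α e i) = f := by
  classical
  rw [cyclotomicCoset_eq_image hα hi, card_image_of_injOn, card_range]
  intro k hk l hl hkl
  simp only [coe_range, Set.mem_Iio] at hk hl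
  have hlt : ∀ m < f, i + e * m < orderOf α := fun m hm => by
    rw [hα]; nlinarith
  have h := pow_inj_mod.mp (Units.val_injective (by simpa using hkl) : α ^ (i + e * k) = _)
  rw [Nat.mod_eq_of_lt (hlt k hk), Nat.mod_eq_of_lt (hlt l hl)] at h
  exact Nat.eq_of_mul_eq_mul_left (Nat.zero_lt_of_lt hi) (Nat.add_left_cancel h)

end Cosets

theorem zpow_pow_succ_eq_self_iff {G : Type*} [Group G] {α : G} {e f : ℕ}
    (hα : orderOf α = e * f) (hf : f ≠ 0) (n : ℤ) :
    (α ^ n) ^ (f + 1) = α ^ n ↔ (e : ℤ) ∣ n := by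
  rw [pow_succ, mul_eq_right, ← zpow_natCast, ← zpow_mul, ← orderOf_dvd_iff_zpow_eq_one, hα,
    Nat.cast_mul]
  exact Int.mul_dvd_mul_iff_right (Int.natCast_ne_zero.mpr hf)

section FixedCoset

variable {F : Type*} [Field F] {σ : F →+* F} {a b x : F}

/-- The coset `a K^*` of the multiplicative group of the fixed field `K` of `σ`, for `a ≠ 0`
(`fixedCoset σ 0` is junk: all of `F^*`, since `x / 0 = 0`). -/
def fixedCoset (σ : F →+* F) (a : F) : Set F :=
  {x | x ≠ 0 ∧ σ (x / a) = x / a}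

theorem fixed_iff_of_mem_fixedCoset (hx : x ∈ fixedCoset σ a) (ha : a ≠ 0) :
    σ x = x ↔ σ a = a := by
  obtain ⟨hx0, hxa⟩ := hx
  constructor
  · intro h
    rw [← div_div_cancel₀ hx0 (b := a), map_div₀, h, hxa]
  · intro h
    rw [← mul_div_cancel₀ x ha, map_mul, h, hxa]

theorem fixed_iff_fixed_of_mem_fixedCoset (ha : a ≠ 0) (hb : b ≠ 0)
    (hx : x ∈ fixedCoset σ a) (hx1 : x + 1 ∈ fixedCoset σ b) : σ a = a ↔ σ b = b := by
  rw [← fixed_iff_of_mem_fixedCoset hx ha, ← fixed_iff_of_mem_fixedCoset hx1 hb, map_add, map_one,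
    add_left_inj]

theorem fixed_of_mem_fixedCoset_of_add_one_mem (hx : x ∈ fixedCoset σ a)
    (hx1 : x + 1 ∈ fixedCoset σ a) : σ a = a := by
  have h : σ a⁻¹ = a⁻¹ := by
    rw [show a⁻¹ = (x + 1) / a - x / a by ring, map_sub, hx.2, hx1.2]
  rwa [map_inv₀, inv_inj] at h

theorem eq_of_mem_fixedCoset {y : F} (hab : σ (b / a) ≠ b / a) (hx : x ∈ fixedCoset σ a)
    (hy : y ∈ fixedCoset σ a) (hx1 : x + 1 ∈ fixedCoset σ b) (hy1 : y + 1 ∈ fixedCoset σ b) :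
    x = y := by
  by_contra hne
  have hxy : x - y ≠ 0 := sub_ne_zero.mpr hne
  have hb : b ≠ 0 := by rintro rfl; simp at hab
  have h1 : σ ((x - y) / a) = (x - y) / a := by rw [sub_div, map_sub, hx.2, hy.2]
  have h2 : σ ((x - y) / b) = (x - y) / b := by
    rw [show (x - y) / b = (x + 1) / b - (y + 1) / b by ring, map_sub, hx1.2, hy1.2]
  apply hab
  rw [show b / a = (x - y) / a / ((x - y) / b) by field_simp, map_div₀, h1, h2]

theorem exists_mem_fixedCoset (hσ : Involutive σ) (ha : σ a ≠ a) (hb : σ b ≠ b)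
    (hab : σ (b / a) ≠ b / a) : ∃ x, x ∈ fixedCoset σ a ∧ x + 1 ∈ fixedCoset σ b := by
  have ha0 : a ≠ 0 := by rintro rfl; exact ha (map_zero σ)
  have hb0 : b ≠ 0 := by rintro rfl; exact hb (map_zero σ)
  have hu : b / a - σ (b / a) ≠ 0 := sub_ne_zero.mpr (Ne.symm hab)
  have hy : a⁻¹ - σ a⁻¹ ≠ 0 := by
    rw [sub_ne_zero, map_inv₀]; exact fun h => ha (inv_injective h).symm
  -- `x = b d - 1` with `x / a = d (b / a) - a⁻¹`: solve `σ (x / a) = x / a` for `d` using `σ² = 1`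
  obtain ⟨d, hdu, hd, hd0⟩ : ∃ d, d * (b / a - σ (b / a)) = a⁻¹ - σ a⁻¹ ∧ σ d = d ∧ d ≠ 0 := by
    refine ⟨(a⁻¹ - σ a⁻¹) / (b / a - σ (b / a)), div_mul_cancel₀ _ hu, ?_, div_ne_zero hy hu⟩
    rw [map_div₀, map_sub, map_sub, hσ, hσ, ← neg_sub a⁻¹, ← neg_sub (b / a), neg_div_neg_eq]
  refine ⟨b * d - 1, ⟨?_, ?_⟩, ?_, ?_⟩
  · intro h
    apply hb
    rw [eq_inv_of_mul_eq_one_left (sub_eq_zero.mp h), map_inv₀, hd]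
  · rw [show (b * d - 1) / a = d * (b / a) - a⁻¹ by field_simp, map_sub, map_mul, hd]
    linear_combination -hdu
  · simpa using mul_ne_zero hb0 hd0
  · rwa [sub_add_cancel, mul_div_cancel_left₀ d hb0]

end FixedCoset

section FixedPowers

variable {F : Type*} [Field F] {α : Fˣ} {e i : ℕ} {σ : F →+* F}

theorem apply_zpow_ne_of_abs_lt (hfix : ∀ n : ℤ, σ ((α : F) ^ n) = (α : F) ^ n ↔ (e : ℤ) ∣ n)
    {n : ℤ} (h0 : n ≠ 0) (hn : |n| < e) : σ ((α : F) ^ n) ≠ (α : F) ^ n :=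
  fun h => h0 (Int.eq_zero_of_abs_lt_dvd ((hfix n).mp h) hn)

theorem apply_pow_ne_of_lt (hfix : ∀ n : ℤ, σ ((α : F) ^ n) = (α : F) ^ n ↔ (e : ℤ) ∣ n)
    (hi0 : 0 < i) (hi : i < e) : σ ((α : F) ^ i) ≠ (α : F) ^ i := by
  simpa using apply_zpow_ne_of_abs_lt hfix (n := i) (by omega) (by rw [Nat.abs_cast]; omega)

end FixedPowers

section CyclotomicNumbers

variable {F : Type*} [Field F] [Fintype F] {α : Fˣ} {e i j : ℕ} {σ : F →+* F}

theorem coe_cyclotomicCoset (hgen : ∀ x : Fˣ, x ∈ Subgroup.zpowers α)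
    (hfix : ∀ n : ℤ, σ ((α : F) ^ n) = (α : F) ^ n ↔ (e : ℤ) ∣ n) (hi : i < e) :
    (cyclotomicCoset α e i : Set F) = fixedCoset σ ((α : F) ^ i) := by
  have hα0 : (α : F) ≠ 0 := α.ne_zero
  have hdiv : ∀ m : ℕ, (α : F) ^ m / (α : F) ^ i = (α : F) ^ ((m : ℤ) - i) := fun m => by
    rw [zpow_sub₀ hα0, zpow_natCast, zpow_natCast]
  ext x
  simp only [cyclotomicCoset, coe_filter, mem_univ, true_and, Set.mem_ofPred_eq, fixedCoset]
  constructor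
  · rintro ⟨t, rfl, ht⟩
    refine ⟨pow_ne_zero t hα0, ?_⟩
    rw [hdiv, hfix, ← Nat.modEq_iff_dvd]
    exact (Nat.mod_eq_of_lt hi).trans ht.symm
  · rintro ⟨hx0, hx⟩
    obtain ⟨m, hm⟩ := (Submonoid.mem_powers_iff _ _).mp
      (mem_powers_iff_mem_zpowers.mpr (hgen (Units.mk0 x hx0)))
    obtain rfl : x = (α : F) ^ m := by simpa using (congrArg Units.val hm).symm
    rw [hdiv, hfix] at hx
    have hord : (e : ℤ) ∣ orderOf α := by
      rw [← hfix, zpow_natCast, ← Units.val_pow_eq_pow_val, pow_orderOf_eq_one, Units.val_one,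
        map_one]
    -- shift the exponent by a multiple of `orderOf α` to make it at least `i`
    refine ⟨m + orderOf α * i, ?_, ?_⟩
    · rw [pow_add, pow_mul, ← Units.val_pow_eq_pow_val α (orderOf α), pow_orderOf_eq_one,
        Units.val_one, one_pow, mul_one]
    · have h : i ≡ m + orderOf α * i [MOD e] := by
        rw [Nat.modEq_iff_dvd]
        push_cast
        rw [show (m : ℤ) + orderOf α * i - i = m - i + orderOf α * i by ring]
        exact dvd_add hx (dvd_mul_of_dvd_left hord _)
      unfold Nat.ModEq at h
      rw [← h, Nat.mod_eq_of_lt hi]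

theorem cyclotomicNumber_eq_ncard (hgen : ∀ x : Fˣ, x ∈ Subgroup.zpowers α)
    (hfix : ∀ n : ℤ, σ ((α : F) ^ n) = (α : F) ^ n ↔ (e : ℤ) ∣ n) (hi : i < e) (hj : j < e) :
    cyclotomicNumber α e i j =
      {x | x ∈ fixedCoset σ ((α : F) ^ i) ∧ x + 1 ∈ fixedCoset σ ((α : F) ^ j)}.ncard := by
  rw [cyclotomicNumber, ← Set.ncard_coe_finset, coe_filter, ← coe_cyclotomicCoset hgen hfix hi,
    ← coe_cyclotomicCoset hgen hfix hj]
  rfl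

theorem cyclotomicNumber_eq_zero_iff (hgen : ∀ x : Fˣ, x ∈ Subgroup.zpowers α)
    (hfix : ∀ n : ℤ, σ ((α : F) ^ n) = (α : F) ^ n ↔ (e : ℤ) ∣ n) (hi : i < e) (hj : j < e) :
    cyclotomicNumber α e i j = 0 ↔
      ∀ x ∈ fixedCoset σ ((α : F) ^ i), x + 1 ∉ fixedCoset σ ((α : F) ^ j) := by
  rw [cyclotomicNumber_eq_ncard hgen hfix hi hj, Set.ncard_eq_zero, Set.eq_empty_iff_forall_notMem]
  simp only [Set.mem_ofPred_eq, not_and]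

theorem cyclotomicNumber_zero_zero (hgen : ∀ x : Fˣ, x ∈ Subgroup.zpowers α)
    (hfix : ∀ n : ℤ, σ ((α : F) ^ n) = (α : F) ^ n ↔ (e : ℤ) ∣ n) (he : 0 < e) :
    cyclotomicNumber α e 0 0 = #(cyclotomicCoset α e 0) - 1 := by
  rw [cyclotomicNumber_eq_ncard hgen hfix he he, ← Set.ncard_coe_finset,
    coe_cyclotomicCoset hgen hfix he, ← Set.ncard_sdiff_singleton_of_mem (a := -1)]
  · congr 1
    ext x
    simp only [fixedCoset, pow_zero, div_one, Set.mem_ofPred_eq, Set.mem_sdiff,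
      Set.mem_singleton_iff, map_add, map_one, add_left_inj, ne_eq, add_eq_zero_iff_eq_neg]
    tauto
  · simp [fixedCoset]

theorem cyclotomicNumber_zero_left (hgen : ∀ x : Fˣ, x ∈ Subgroup.zpowers α)
    (hfix : ∀ n : ℤ, σ ((α : F) ^ n) = (α : F) ^ n ↔ (e : ℤ) ∣ n) (hi0 : 0 < i) (hi : i < e) :
    cyclotomicNumber α e 0 i = 0 := by
  refine (cyclotomicNumber_eq_zero_iff hgen hfix (hi0.trans hi) hi).mpr fun x hx hx1 => ?_
  apply apply_pow_ne_of_lt hfix hi0 hi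
  rw [← fixed_iff_fixed_of_mem_fixedCoset (pow_ne_zero _ α.ne_zero) (pow_ne_zero _ α.ne_zero) hx
    hx1, pow_zero, map_one]

theorem cyclotomicNumber_zero_right (hgen : ∀ x : Fˣ, x ∈ Subgroup.zpowers α)
    (hfix : ∀ n : ℤ, σ ((α : F) ^ n) = (α : F) ^ n ↔ (e : ℤ) ∣ n) (hi0 : 0 < i) (hi : i < e) :
    cyclotomicNumber α e i 0 = 0 := by
  refine (cyclotomicNumber_eq_zero_iff hgen hfix hi (hi0.trans hi)).mpr fun x hx hx1 => ?_
  apply apply_pow_ne_of_lt hfix hi0 hi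
  rw [fixed_iff_fixed_of_mem_fixedCoset (pow_ne_zero _ α.ne_zero) (pow_ne_zero _ α.ne_zero) hx hx1,
    pow_zero, map_one]

theorem cyclotomicNumber_self (hgen : ∀ x : Fˣ, x ∈ Subgroup.zpowers α)
    (hfix : ∀ n : ℤ, σ ((α : F) ^ n) = (α : F) ^ n ↔ (e : ℤ) ∣ n) (hi0 : 0 < i) (hi : i < e) :
    cyclotomicNumber α e i i = 0 :=
  (cyclotomicNumber_eq_zero_iff hgen hfix hi hi).mpr fun _ hx hx1 =>
    apply_pow_ne_of_lt hfix hi0 hi (fixed_of_mem_fixedCoset_of_add_one_mem hx hx1)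

theorem cyclotomicNumber_of_ne (hσ : Involutive σ) (hgen : ∀ x : Fˣ, x ∈ Subgroup.zpowers α)
    (hfix : ∀ n : ℤ, σ ((α : F) ^ n) = (α : F) ^ n ↔ (e : ℤ) ∣ n) (hi0 : 0 < i) (hi : i < e)
    (hj0 : 0 < j) (hj : j < e) (hij : i ≠ j) : cyclotomicNumber α e i j = 1 := by
  rw [cyclotomicNumber_eq_ncard hgen hfix hi hj, Set.ncard_eq_one]
  have hji : σ ((α : F) ^ j / (α : F) ^ i) ≠ (α : F) ^ j / (α : F) ^ i := by
    rw [← zpow_natCast, ← zpow_natCast, ← zpow_sub₀ α.ne_zero]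
    exact apply_zpow_ne_of_abs_lt hfix (by omega) (by rw [abs_lt]; omega)
  obtain ⟨x, hx⟩ := exists_mem_fixedCoset hσ (apply_pow_ne_of_lt hfix hi0 hi)
    (apply_pow_ne_of_lt hfix hj0 hj) hji
  exact ⟨x, Set.eq_singleton_iff_unique_mem.mpr
    ⟨hx, fun y hy => eq_of_mem_fixedCoset hji hy.1 hx.1 hy.2 hx.2⟩⟩

end CyclotomicNumbers

section Frobenius

variable {F : Type*} [Field F] {p r : ℕ} [ExpChar F p]

theorem iterateFrobenius_involutive [Fintype F] (hcard : Fintype.card F = p ^ (2 * r)) :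
    Involutive (iterateFrobenius F p r) := fun x => by
  rw [iterateFrobenius_def, iterateFrobenius_def, ← pow_mul, ← pow_add, ← two_mul, ← hcard,
    FiniteField.pow_card]

theorem iterateFrobenius_zpow_eq_self_iff {α : Fˣ} {e : ℕ} (hα : orderOf α = e * (p ^ r - 1))
    (hpr : 2 ≤ p ^ r) (n : ℤ) :
    iterateFrobenius F p r ((α : F) ^ n) = (α : F) ^ n ↔ (e : ℤ) ∣ n := by
  rw [iterateFrobenius_def, ← zpow_pow_succ_eq_self_iff hα (by omega),
    Nat.sub_add_cancel (by omega : 1 ≤ p ^ r), ← Units.val_inj, Units.val_pow_eq_pow_val,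
    Units.val_zpow_eq_zpow_val]

end Frobenius

/-- Let `p` be a prime, `r ≥ 1`, `q = p^(2r)` and `e = p^r + 1`.  Then the
cyclotomic numbers of order `e` in `F_q` are: `(0,0)_e = p^r - 2`,
`(0,i)_e = (i,0)_e = (i,i)_e = 0` for `i ≠ 0`, and `(i,j)_e = 1` for distinct nonzero
`i, j`. -/
theorem stmt7 {F : Type*} [Field F] [Fintype F]
    (p r q e : ℕ) (hp : p.Prime) (hr : 1 ≤ r)
    (hq : q = p ^ (2 * r)) (hcard : Fintype.card F = q) (he : e = p ^ r + 1)
    (α : Fˣ) (hα : ∀ x : Fˣ, x ∈ Subgroup.zpowers α) :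
    (cyclotomicNumber α e 0 0 = p ^ r - 2) ∧
    (∀ i : ℕ, 0 < i → i < e →
      cyclotomicNumber α e 0 i = 0 ∧
      cyclotomicNumber α e i 0 = 0 ∧
      cyclotomicNumber α e i i = 0) ∧
    (∀ i j : ℕ, 0 < i → i < e → 0 < j → j < e → i ≠ j →
      cyclotomicNumber α e i j = 1) := by
  classical
  subst hq he
  have hpr : 2 ≤ p ^ r := Nat.one_lt_pow (by omega) hp.one_lt
  have horder : orderOf α = (p ^ r + 1) * (p ^ r - 1) := by
    rw [orderOf_eq_card_of_forall_mem_zpowers hα, Nat.card_eq_fintype_card, Fintype.card_units,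
      hcard, pow_mul']
    simpa using Nat.sq_sub_sq (p ^ r) 1
  have : Fact p.Prime := ⟨hp⟩
  have : CharP F p := charP_of_card_eq_prime_pow hcard
  have hσ := iterateFrobenius_involutive (F := F) (p := p) hcard
  have hfix := iterateFrobenius_zpow_eq_self_iff horder hpr
  refine ⟨?_, fun i hi0 hi => ⟨?_, ?_, ?_⟩, fun i j hi0 hi hj0 hj hij => ?_⟩
  · rw [cyclotomicNumber_zero_zero hα hfix (by omega), card_cyclotomicCoset horder (by omega)]
    omega
  · exact cyclotomicNumber_zero_left hα hfix hi0 hi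
  · exact cyclotomicNumber_zero_right hα hfix hi0 hi
  · exact cyclotomicNumber_self hα hfix hi0 hi
  · exact cyclotomicNumber_of_ne hσ hα hfix hi0 hi hj0 hj hij
end

section
/- In the Galois ring GR(p^2, r), the multiset ΔT^* = {β - β' : β, β' ∈ T^*, β ≠ β'} of differences of distinct elements of the Teichmüller group contains only units of GR(p^2, r). Moreover, if a difference d ∈ ΔT^* lies in the multiplicative coset (1 + pβ)T^* for some β ∈ T, then the entire coset (1 + pβ)T^* is contained in the set underlying ΔT^*. -/
/-!
A difference `ξ^i - ξ^j` of Teichmüller elements that is not a unit lies in the maximal ideal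
`pR`, so `u = ξ^i ξ^{-j}` is of the form `1 + pa`. As `p² = 0`, the binomial expansion collapses
to `u^p = 1 + p²a = 1`; but `u` is a power of `ξ`, whose order `p^r - 1` is prime to `p`, so
`u = 1`. The second claim holds because the differences of distinct Teichmüller elements are
stable under multiplication by `T^*`, and two elements of one coset `(1 + pβ)T^*` differ by a
factor in `T^*`.
-/

open Ideal IsLocalRing

lemma one_add_pow_of_sq_eq_zero {R : Type*} [CommRing R] {c : R} (hc : c ^ 2 = 0) (n : ℕ) :
    (1 + c) ^ n = 1 + n * c := by
  simpa [Polynomial.derivative_X_pow] using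
    Polynomial.eval_add_of_sq_eq_zero (Polynomial.X ^ n) 1 c hc

lemma pow_eq_one_of_sub_one_mem_span {R : Type*} [CommRing R] {p : ℕ} (hp : (p : R) ^ 2 = 0)
    {u : R} (hu : u - 1 ∈ span {(p : R)}) : u ^ p = 1 := by
  obtain ⟨a, ha⟩ := mem_span_singleton'.1 hu
  obtain rfl : u = 1 + a * p := by linear_combination -ha
  rw [one_add_pow_of_sq_eq_zero (by linear_combination a ^ 2 * hp)]
  linear_combination a * hp

lemma eq_one_of_mem_zpowers_of_pow_eq_one {G : Type*} [Group G] {ξ u : G} {n : ℕ}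
    (hcop : (orderOf ξ).Coprime n) (hu : u ∈ Subgroup.zpowers ξ) (hun : u ^ n = 1) : u = 1 :=
  orderOf_eq_one_iff.1 <|
    Nat.eq_one_of_dvd_coprimes hcop (orderOf_dvd_of_mem_zpowers hu) (orderOf_dvd_of_pow_eq_one hun)

lemma exists_pow_mul_pow_eq_pow {M : Type*} [Monoid M] {x : M} (hx : IsOfFinOrder x) (k l : ℕ) :
    ∃ e : ℕ, x ^ k * x ^ e = x ^ l := by
  obtain ⟨m, hm⟩ := Nat.exists_eq_add_of_lt (orderOf_pos_iff.2 hx)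
  refine ⟨l + k * m, ?_⟩
  rw [← pow_add, show k + (l + k * m) = l + orderOf x * k by rw [hm]; ring, pow_add, pow_mul,
    pow_orderOf_eq_one, one_pow, mul_one]

section

variable {R : Type*} [CommRing R]

theorem isUnit_pow_sub_pow [IsLocalRing R] {p : ℕ} (hmax : maximalIdeal R = span {(p : R)})
    (hp : (p : R) ^ 2 = 0) {ξ : Rˣ} (hcop : (orderOf ξ).Coprime p) {i j : ℕ}
    (hne : (ξ : R) ^ i ≠ (ξ : R) ^ j) : IsUnit ((ξ : R) ^ i - (ξ : R) ^ j) := by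
  by_contra hnu
  set u : Rˣ := ξ ^ i * (ξ ^ j)⁻¹
  have hu_sub : (u : R) - 1 = ((ξ : R) ^ i - (ξ : R) ^ j) * ↑(ξ ^ j)⁻¹ := by
    rw [sub_mul, ← Units.val_pow_eq_pow_val, ← Units.val_pow_eq_pow_val, Units.mul_inv]
    rfl
  have hu_mem : (u : R) - 1 ∈ span {(p : R)} :=
    hmax ▸ hu_sub ▸ mul_mem_right _ _ ((mem_maximalIdeal _).2 hnu)
  have hup : u ^ p = 1 := Units.ext (by simpa using pow_eq_one_of_sub_one_mem_span hp hu_mem)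
  have hu_zpow : u ∈ Subgroup.zpowers ξ :=
    Subgroup.mul_mem _ (Subgroup.npow_mem_zpowers ξ i)
      (Subgroup.inv_mem _ (Subgroup.npow_mem_zpowers ξ j))
  have hu_one := eq_one_of_mem_zpowers_of_pow_eq_one hcop hu_zpow hup
  rw [mul_inv_eq_one] at hu_one
  exact hne (by simpa using congrArg Units.val hu_one)

lemma pow_add_ne_pow_add (ξ : Rˣ) {i j : ℕ} (hne : (ξ : R) ^ i ≠ (ξ : R) ^ j) (e : ℕ) :
    (ξ : R) ^ (i + e) ≠ (ξ : R) ^ (j + e) := by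
  simp only [pow_add]
  exact fun h => hne (((Units.isUnit ξ).pow e).mul_right_cancel h)

end

theorem stmt11_general {R : Type*} [CommRing R] [IsLocalRing R]
    (p r : ℕ) (hp : p.Prime) (hr : 1 ≤ r)
    (hchar : CharP R (p ^ 2))
    (hmax : IsLocalRing.maximalIdeal R = Ideal.span {(p : R)})
    (ξ : Rˣ) (hξ : orderOf ξ = p ^ r - 1) :
    (∀ β β' : R, (∃ i : ℕ, β = (ξ : R) ^ i) → (∃ j : ℕ, β' = (ξ : R) ^ j) → β ≠ β' →
      IsUnit (β - β')) ∧
    (∀ d β : R, (β = 0 ∨ ∃ i : ℕ, β = (ξ : R) ^ i) →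
      (∃ γ γ' : R, (∃ i : ℕ, γ = (ξ : R) ^ i) ∧ (∃ j : ℕ, γ' = (ξ : R) ^ j) ∧ γ ≠ γ' ∧
        d = γ - γ') →
      (∃ τ : R, (∃ i : ℕ, τ = (ξ : R) ^ i) ∧ d = (1 + (p : R) * β) * τ) →
      ∀ x : R, (∃ τ : R, (∃ i : ℕ, τ = (ξ : R) ^ i) ∧ x = (1 + (p : R) * β) * τ) →
        ∃ γ γ' : R, (∃ i : ℕ, γ = (ξ : R) ^ i) ∧ (∃ j : ℕ, γ' = (ξ : R) ^ j) ∧ γ ≠ γ' ∧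
          x = γ - γ') := by
  have hp_sq : (p : R) ^ 2 = 0 := by exact_mod_cast CharP.cast_eq_zero R (p ^ 2)
  have hpr : 1 ≤ p ^ r := Nat.one_le_pow _ _ hp.pos
  have hcop : (orderOf ξ).Coprime p := hξ ▸
    ((Nat.coprime_self_sub_left hpr).2 (Nat.coprime_one_left _)).coprime_dvd_right
      (dvd_pow_self p (by omega))
  have hfin : IsOfFinOrder (ξ : R) := Units.isOfFinOrder_val.2 <| orderOf_pos_iff.1 <|
    hξ ▸ Nat.sub_pos_of_lt (Nat.one_lt_pow (by omega) hp.one_lt)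
  refine ⟨?_, ?_⟩
  · rintro _ _ ⟨i, rfl⟩ ⟨j, rfl⟩ hne
    exact isUnit_pow_sub_pow hmax hp_sq hcop hne
  · rintro d β - ⟨_, _, ⟨i, rfl⟩, ⟨j, rfl⟩, hne, rfl⟩ ⟨_, ⟨k, rfl⟩, hd⟩ x ⟨_, ⟨l, rfl⟩, rfl⟩
    obtain ⟨e, he⟩ := exists_pow_mul_pow_eq_pow hfin k l
    refine ⟨_, _, ⟨i + e, rfl⟩, ⟨j + e, rfl⟩, pow_add_ne_pow_add ξ hne e, ?_⟩
    rw [← he, ← mul_assoc, ← hd, pow_add, pow_add, sub_mul]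

/-- In the Galois ring `R = GR(p², r)` with Teichmüller group
`T^* = {ξ^i : i ∈ ℕ}`:
(1) every difference of two distinct elements of `T^*` is a unit of `R`; and
(2) if a difference `d` of two distinct elements of `T^*` lies in the multiplicative coset
`(1 + pβ)T^*` for some Teichmüller element `β`, then the whole coset `(1 + pβ)T^*` is contained
in the set of differences of distinct elements of `T^*`. -/
theorem stmt11 {R : Type*} [CommRing R] [Fintype R] [IsLocalRing R]
    (p r : ℕ) (hp : p.Prime) (hr : 1 ≤ r)
    (hchar : CharP R (p ^ 2))
    (hmax : IsLocalRing.maximalIdeal R = Ideal.span {(p : R)})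
    (hcard : Fintype.card R = p ^ (2 * r))
    (ξ : Rˣ) (hξ : orderOf ξ = p ^ r - 1) :
    (∀ β β' : R, (∃ i : ℕ, β = (ξ : R) ^ i) → (∃ j : ℕ, β' = (ξ : R) ^ j) → β ≠ β' →
      IsUnit (β - β')) ∧
    (∀ d β : R, (β = 0 ∨ ∃ i : ℕ, β = (ξ : R) ^ i) →
      (∃ γ γ' : R, (∃ i : ℕ, γ = (ξ : R) ^ i) ∧ (∃ j : ℕ, γ' = (ξ : R) ^ j) ∧ γ ≠ γ' ∧
        d = γ - γ') →
      (∃ τ : R, (∃ i : ℕ, τ = (ξ : R) ^ i) ∧ d = (1 + (p : R) * β) * τ) →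
      ∀ x : R, (∃ τ : R, (∃ i : ℕ, τ = (ξ : R) ^ i) ∧ x = (1 + (p : R) * β) * τ) →
        ∃ γ γ' : R, (∃ i : ℕ, γ = (ξ : R) ^ i) ∧ (∃ j : ℕ, γ' = (ξ : R) ^ j) ∧ γ ≠ γ' ∧
          x = γ - γ') :=
  stmt11_general p r hp hr hchar hmax ξ hξ
end

section
/- Let T be the Teichmüller set of the Galois ring R = GR(p^2, r) and T^* = T \ {0}. Then the collection E = {(1 + pα)T^* : α ∈ T} ∪ {pT^*} is a near-complete (p^{2r}, p^r - 1, p^r - 2) disjoint difference family in the additive group of R: the p^r + 1 sets in E are pairwise disjoint subsets of size p^r - 1 partitioning R \ {0}, and every nonzero element of R occurs exactly p^r - 2 times in the union of the internal difference multisets of the sets in E. -/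
open Finset

/-!
Write `π = p` and `T^* = T \ {0}`. Since `(1 + πc)^p = 1`, a congruence `ξ^m ≡ 1 (mod π)` forces
`ξ^(mp) = 1`, so the `p^r - 1` powers of `ξ` are pairwise incongruent modulo `π`; the `p^(2r)`
sums `a + πb` with `a, b ∈ T` are then distinct, so `T` is a system of representatives of `R`
modulo `π`.

The units of `R` are then the products `(1 + πα)t` with `α ∈ T`, `t ∈ T^*`, each obtained once,
and the nonzero non-units are the `πt` with `t ∈ T^*`. For distinct `t, t' ∈ T^*` the difference
`t - t'` is a unit, so a unit `x` equals `(1 + πα)(t - t')` for some (then unique) `α ∈ T` iff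
`t - t' ≡ x`, and `πy` equals `π(t - t')` iff `t - t' ≡ y`. Either way one counts the pairs in
`T^*` whose difference is congruent to a fixed unit `u`: every `t ∈ T^*` other than the
representative of `u` has exactly one partner, which gives `|T^*| - 1 = p^r - 2`.
-/

section

variable {R : Type*} [CommRing R]

lemma diffCount_image_mul [DecidableEq R] {c : R} {A : Finset R} (hc : Set.InjOn (c * ·) A)
    (x : R) :
    diffCount (A.image (c * ·)) x = #{q ∈ A ×ˢ A | q.1 ≠ q.2 ∧ c * (q.1 - q.2) = x} := by
  rw [diffCount, ← prodMap_image_product, filter_image, card_image_of_injOn]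
  · refine congrArg card (filter_congr fun q hq => ?_)
    rw [mem_product] at hq
    simp only [Prod.map_fst, Prod.map_snd, mul_sub, hc.ne_iff hq.1 hq.2]
  · exact (hc.prodMap hc).mono fun q hq => mem_product.1 (mem_filter.1 hq).1

lemma one_add_mul_pow_self {n : ℕ} (hn : (n : R) * n = 0) (c : R) : (1 + n * c) ^ n = 1 := by
  have h := Polynomial.eval_add_of_sq_eq_zero (Polynomial.X ^ n) 1 (n * c)
    (by rw [mul_pow, sq, hn, zero_mul])
  simp only [Polynomial.eval_pow, Polynomial.eval_X, Polynomial.derivative_X_pow, one_pow] at h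
  simp [h, ← mul_assoc, hn]

lemma orderOf_dvd_of_dvd_pow_sub_one {p : ℕ} (hp : (p : R) * p = 0) {ξ : Rˣ}
    (hcop : (orderOf ξ).Coprime p) {m : ℕ} (h : (p : R) ∣ (ξ : R) ^ m - 1) :
    orderOf ξ ∣ m := by
  obtain ⟨c, hc⟩ := h
  have hξm : ((ξ ^ m : Rˣ) : R) = 1 + p * c := by push_cast; linear_combination hc
  refine hcop.dvd_of_dvd_mul_right (orderOf_dvd_of_pow_eq_one (Units.ext ?_))
  rw [pow_mul, Units.val_pow_eq_pow_val, hξm, one_add_mul_pow_self hp, Units.val_one]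

lemma eq_of_dvd_pow_sub_pow {p : ℕ} (hp : (p : R) * p = 0) {ξ : Rˣ}
    (hcop : (orderOf ξ).Coprime p) {i j : ℕ} (hi : i < orderOf ξ) (hj : j < orderOf ξ)
    (h : (p : R) ∣ (ξ : R) ^ i - (ξ : R) ^ j) : i = j := by
  wlog hji : j ≤ i generalizing i j
  · exact (this hj hi (dvd_sub_comm.1 h) (by omega)).symm
  have hfac : (ξ : R) ^ i - (ξ : R) ^ j = ((ξ ^ j : Rˣ) : R) * ((ξ : R) ^ (i - j) - 1) := by
    rw [Units.val_pow_eq_pow_val, mul_sub, mul_one, ← pow_add, Nat.add_sub_cancel' hji]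
  rw [hfac, Units.dvd_mul_left] at h
  have := Nat.eq_zero_of_dvd_of_lt (orderOf_dvd_of_dvd_pow_sub_one hp hcop h) (by omega)
  omega

/-- The role of `p` in `GR(p², r)`. -/
structure IsSquareZeroUniformizer (π : R) : Prop where
  isUnit_iff : ∀ x, IsUnit x ↔ ¬ π ∣ x
  mul_eq_zero_iff : ∀ z, π * z = 0 ↔ π ∣ z

namespace IsSquareZeroUniformizer

variable {π : R}

lemma of_maximalIdeal_eq_span [IsLocalRing R]
    (hmax : IsLocalRing.maximalIdeal R = Ideal.span {π}) (hπ : π * π = 0) (hπ0 : π ≠ 0) :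
    IsSquareZeroUniformizer π := by
  have hunit : ∀ x : R, IsUnit x ↔ ¬ π ∣ x := fun x => by
    rw [← Ideal.mem_span_singleton, ← hmax, IsLocalRing.mem_maximalIdeal, mem_nonunits_iff,
      not_not]
  refine ⟨hunit, fun z => ⟨fun h => ?_, fun ⟨c, hc⟩ => ?_⟩⟩
  · by_contra hz
    exact hπ0 ((IsUnit.mul_left_eq_zero ((hunit z).2 hz)).1 h)
  · rw [hc, ← mul_assoc, hπ, zero_mul]

lemma of_charP_sq [IsLocalRing R] {p : ℕ} [CharP R (p ^ 2)] (hp : 1 < p)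
    (hmax : IsLocalRing.maximalIdeal R = Ideal.span {(p : R)}) :
    IsSquareZeroUniformizer (p : R) := by
  refine of_maximalIdeal_eq_span hmax (by rw [← Nat.cast_mul, ← sq, CharP.cast_eq_zero]) ?_
  rw [Ne, CharP.cast_eq_zero_iff R (p ^ 2), ← pow_one p, ← pow_mul, one_mul,
    Nat.pow_dvd_pow_iff_le_right hp]
  omega

lemma isUnit_one_add_mul (hπ : IsSquareZeroUniformizer π) (a : R) : IsUnit (1 + π * a) := by
  refine (hπ.isUnit_iff _).2 fun h => (hπ.isUnit_iff π).1 (isUnit_of_dvd_one ?_) dvd_rfl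
  simpa using dvd_sub h (dvd_mul_right π a)

end IsSquareZeroUniformizer

lemma card_insert_zero_image_pow [Nontrivial R] [DecidableEq R] (ξ : Rˣ) :
    #(insert 0 ((range (orderOf ξ)).image fun i => (ξ : R) ^ i)) = orderOf ξ + 1 := by
  rw [card_insert_of_notMem (by simpa using fun i _ => (ξ.isUnit.pow i).ne_zero),
    card_image_of_injOn, card_range]
  exact fun i hi j hj h => pow_injOn_Iio_orderOf (by simpa using hi) (by simpa using hj)
    (Units.ext (by simpa using h))

lemma eq_of_dvd_sub_of_mem_insert_zero_powers [DecidableEq R] {p : ℕ}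
    (hπ : IsSquareZeroUniformizer (p : R)) {ξ : Rˣ} (hcop : (orderOf ξ).Coprime p) {a b : R}
    (ha : a ∈ insert 0 ((range (orderOf ξ)).image fun i => (ξ : R) ^ i))
    (hb : b ∈ insert 0 ((range (orderOf ξ)).image fun i => (ξ : R) ^ i))
    (h : (p : R) ∣ a - b) : a = b := by
  have hξ : ∀ i, ¬ (p : R) ∣ (ξ : R) ^ i := fun i => (hπ.isUnit_iff _).1 (ξ.isUnit.pow i)
  have hp : (p : R) * p = 0 := (hπ.mul_eq_zero_iff _).2 dvd_rfl
  simp only [mem_insert, mem_image, mem_range] at ha hb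
  rcases ha with rfl | ⟨i, hi, rfl⟩ <;> rcases hb with rfl | ⟨j, hj, rfl⟩
  · rfl
  · exact absurd (by simpa using h) (hξ j)
  · exact absurd (by simpa using h) (hξ i)
  · rw [eq_of_dvd_pow_sub_pow hp hcop hi hj h]

structure IsRepSystem (π : R) (T : Finset R) : Prop where
  eq_of_dvd_sub : ∀ a ∈ T, ∀ b ∈ T, π ∣ a - b → a = b
  exists_dvd_sub : ∀ x, ∃ t ∈ T, π ∣ x - t

open scoped Classical

variable {π : R} {T : Finset R}

namespace IsRepSystem

lemma of_card_eq_sq [Fintype R] [DecidableEq R] (hπ : IsSquareZeroUniformizer π)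
    (hinj : ∀ a ∈ T, ∀ b ∈ T, π ∣ a - b → a = b) (hcard : Fintype.card R = #T ^ 2) :
    IsRepSystem π T := by
  have hinjOn : Set.InjOn (fun q : R × R => q.1 + π * q.2) ↑(T ×ˢ T) := by
    rintro ⟨a, b⟩ hab ⟨a', b'⟩ hab' h
    simp only [coe_product, Set.mem_prod, mem_coe] at hab hab'
    obtain rfl : a = a' := hinj a hab.1 a' hab'.1 ⟨b' - b, by linear_combination h⟩
    obtain rfl : b = b' :=
      hinj b hab.2 b' hab'.2 ((hπ.mul_eq_zero_iff _).1 (by linear_combination h))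
    rfl
  have hsurj : (T ×ˢ T).image (fun q : R × R => q.1 + π * q.2) = univ :=
    eq_univ_of_card _ (by rw [card_image_of_injOn hinjOn, card_product, hcard, sq])
  refine ⟨hinj, fun x => ?_⟩
  obtain ⟨⟨a, b⟩, hab, rfl⟩ := mem_image.1 (hsurj ▸ mem_univ x)
  exact ⟨a, (mem_product.1 hab).1, b, by ring⟩

lemma card_filter_dvd_sub (hT : IsRepSystem π T) (x : R) : #{t ∈ T | π ∣ x - t} = 1 := by
  obtain ⟨t, ht, hxt⟩ := hT.exists_dvd_sub x
  refine card_eq_one.2 ⟨t, eq_singleton_iff_unique_mem.2 ⟨mem_filter.2 ⟨ht, hxt⟩, ?_⟩⟩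
  rintro s hs
  rw [mem_filter] at hs
  exact hT.eq_of_dvd_sub s hs.1 t ht (by simpa using dvd_sub hxt hs.2)

lemma not_dvd_sub (hT : IsRepSystem π T) {a b : R} (ha : a ∈ T) (hb : b ∈ T) (hab : a ≠ b) :
    ¬ π ∣ a - b :=
  fun h => hab (hT.eq_of_dvd_sub a ha b hb h)

variable [DecidableEq R]

lemma card_filter_one_add_mul_eq (hT : IsRepSystem π T) (hπ : IsSquareZeroUniformizer π)
    {d : R} (hd : IsUnit d) (x : R) :
    #{α ∈ T | (1 + π * α) * d = x} = if π ∣ d - x then 1 else 0 := by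
  split_ifs with h
  · obtain ⟨c, hc⟩ := h
    obtain ⟨u, rfl⟩ := hd
    rw [← hT.card_filter_dvd_sub (-(c * ↑u⁻¹))]
    refine congrArg card (filter_congr fun α _ => ?_)
    calc (1 + π * α) * u = x ↔ π * (α * u + c) = 0 := by
          rw [← sub_eq_zero,
            show (1 + π * α) * u - x = π * (α * u + c) by linear_combination hc]
      _ ↔ π ∣ -(c * ↑u⁻¹) - α := by
          have : (α * u + c) * ↑u⁻¹ = -(-(c * ↑u⁻¹) - α) := by
            rw [add_mul, mul_assoc, Units.mul_inv, mul_one]; ring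
          rw [hπ.mul_eq_zero_iff, ← Units.dvd_mul_right (u := u⁻¹), this, dvd_neg]
  · refine card_eq_zero.2 (filter_eq_empty_iff.2 fun α _ hα => h ⟨-(α * d), ?_⟩)
    rw [← hα]; ring

lemma not_dvd_of_mem_erase_zero (hT : IsRepSystem π T) (h0 : (0 : R) ∈ T) {t : R}
    (ht : t ∈ T.erase 0) : ¬ π ∣ t := by
  simpa using hT.not_dvd_sub (mem_of_mem_erase ht) h0 (ne_of_mem_erase ht)

lemma erase_zero_nonempty (hT : IsRepSystem π T) (hπ : IsSquareZeroUniformizer π) :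
    (T.erase 0).Nonempty := by
  obtain ⟨t, ht, h⟩ := hT.exists_dvd_sub 1
  refine ⟨t, mem_erase.2 ⟨?_, ht⟩⟩
  rintro rfl
  exact (hπ.isUnit_iff π).1 (isUnit_of_dvd_one (by simpa using h)) dvd_rfl

lemma card_filter_erase_zero_dvd_sub (hT : IsRepSystem π T) {x : R} (hx : ¬ π ∣ x) :
    #{t ∈ T.erase 0 | π ∣ x - t} = 1 := by
  rw [filter_erase, erase_eq_of_notMem (by simp [hx]), hT.card_filter_dvd_sub]

lemma card_pairs_dvd_sub_sub (hT : IsRepSystem π T) (h0 : (0 : R) ∈ T) {y : R}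
    (hy : ¬ π ∣ y) :
    #{q ∈ T.erase 0 ×ˢ T.erase 0 | q.1 ≠ q.2 ∧ π ∣ q.1 - q.2 - y} = #T - 2 := by
  set S := T.erase 0
  have hfiber : ∀ t ∈ S, #{t' ∈ S | π ∣ (t - y) - t'} = if π ∣ t - y then 0 else 1 := by
    intro t _
    split_ifs with h
    · exact card_eq_zero.2 (filter_eq_empty_iff.2 fun t' ht' h' =>
        hT.not_dvd_of_mem_erase_zero h0 ht' (by simpa using dvd_sub h h'))
    · exact hT.card_filter_erase_zero_dvd_sub h
  have hrep : #{t ∈ S | π ∣ t - y} = 1 := by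
    simpa only [dvd_sub_comm] using hT.card_filter_erase_zero_dvd_sub hy
  calc #{q ∈ S ×ˢ S | q.1 ≠ q.2 ∧ π ∣ q.1 - q.2 - y}
      = #{q ∈ S ×ˢ S | π ∣ (q.1 - y) - q.2} := by
        refine congrArg card (filter_congr fun q _ => ?_)
        rw [sub_right_comm, and_iff_right_iff_imp]
        intro h heq
        exact hy (by simpa [heq] using h)
    _ = ∑ t ∈ S, #{t' ∈ S | π ∣ (t - y) - t'} := by
        simp only [card_filter, sum_product]
    _ = #{t ∈ S | ¬ π ∣ t - y} := by
        rw [sum_congr rfl hfiber, card_filter]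
        exact sum_congr rfl fun t _ => by split_ifs <;> rfl
    _ = #T - 2 := by
        have := card_filter_add_card_filter_not (s := S) (π ∣ · - y)
        rw [card_erase_of_mem h0, hrep] at this
        omega

end IsRepSystem

variable [DecidableEq R]

def unitBlock (π : R) (T : Finset R) (α : R) : Finset R :=
  (T.erase 0).image fun t => (1 + π * α) * t

def idealBlock (π : R) (T : Finset R) : Finset R :=
  (T.erase 0).image fun t => π * t

def differenceFamily (π : R) (T : Finset R) : Finset (Finset R) :=
  T.image (unitBlock π T) ∪ {idealBlock π T}

lemma injOn_mul_erase_zero (hT : IsRepSystem π T) (hπ : IsSquareZeroUniformizer π) :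
    Set.InjOn (π * ·) (T.erase 0) := fun a ha b hb h =>
  hT.eq_of_dvd_sub a (mem_of_mem_erase ha) b (mem_of_mem_erase hb)
    ((hπ.mul_eq_zero_iff _).1 (by rw [mul_sub]; exact sub_eq_zero.2 h))

lemma card_unitBlock (hπ : IsSquareZeroUniformizer π) (h0 : (0 : R) ∈ T) (α : R) :
    #(unitBlock π T α) = #T - 1 := by
  rw [unitBlock, card_image_of_injective _ (hπ.isUnit_one_add_mul α).mul_right_injective,
    card_erase_of_mem h0]

lemma card_idealBlock (hT : IsRepSystem π T) (hπ : IsSquareZeroUniformizer π)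
    (h0 : (0 : R) ∈ T) : #(idealBlock π T) = #T - 1 := by
  rw [idealBlock, card_image_of_injOn (injOn_mul_erase_zero hT hπ), card_erase_of_mem h0]

lemma isUnit_of_mem_unitBlock (hT : IsRepSystem π T) (hπ : IsSquareZeroUniformizer π)
    (h0 : (0 : R) ∈ T) {α x : R} (hx : x ∈ unitBlock π T α) : IsUnit x := by
  obtain ⟨t, ht, rfl⟩ := mem_image.1 hx
  exact (hπ.isUnit_one_add_mul α).mul
    ((hπ.isUnit_iff t).2 (hT.not_dvd_of_mem_erase_zero h0 ht))

lemma dvd_of_mem_idealBlock {x : R} (hx : x ∈ idealBlock π T) : π ∣ x := by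
  obtain ⟨t, -, rfl⟩ := mem_image.1 hx
  exact dvd_mul_right π t

lemma ne_zero_of_mem_idealBlock (hT : IsRepSystem π T) (hπ : IsSquareZeroUniformizer π)
    (h0 : (0 : R) ∈ T) {x : R} (hx : x ∈ idealBlock π T) : x ≠ 0 := by
  obtain ⟨t, ht, rfl⟩ := mem_image.1 hx
  exact fun h => hT.not_dvd_of_mem_erase_zero h0 ht ((hπ.mul_eq_zero_iff t).1 h)

lemma disjoint_unitBlock_idealBlock (hT : IsRepSystem π T) (hπ : IsSquareZeroUniformizer π)
    (h0 : (0 : R) ∈ T) (α : R) : Disjoint (unitBlock π T α) (idealBlock π T) :=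
  disjoint_left.2 fun _ hx hx' =>
    (hπ.isUnit_iff _).1 (isUnit_of_mem_unitBlock hT hπ h0 hx) (dvd_of_mem_idealBlock hx')

lemma disjoint_unitBlock (hT : IsRepSystem π T) (hπ : IsSquareZeroUniformizer π)
    (h0 : (0 : R) ∈ T) {α β : R} (hα : α ∈ T) (hβ : β ∈ T) (hαβ : α ≠ β) :
    Disjoint (unitBlock π T α) (unitBlock π T β) := by
  refine disjoint_left.2 fun x hx hx' => ?_
  obtain ⟨t, ht, rfl⟩ := mem_image.1 hx
  obtain ⟨t', ht', h⟩ := mem_image.1 hx'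
  -- modulo `π` both sides reduce to `t' = t`, and then the `π`-parts force `β = α`
  obtain rfl : t' = t := hT.eq_of_dvd_sub t' (mem_of_mem_erase ht') t (mem_of_mem_erase ht)
    ⟨α * t - β * t', by linear_combination h⟩
  obtain ⟨u, hu⟩ := (hπ.isUnit_iff t').2 (hT.not_dvd_of_mem_erase_zero h0 ht)
  have : π ∣ (β - α) * u := hu ▸ (hπ.mul_eq_zero_iff _).1 (by linear_combination h)
  exact hαβ (hT.eq_of_dvd_sub β hβ α hα (Units.dvd_mul_right.1 this)).symm

lemma injOn_unitBlock (hT : IsRepSystem π T) (hπ : IsSquareZeroUniformizer π)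
    (h0 : (0 : R) ∈ T) : Set.InjOn (unitBlock π T) T := by
  intro α hα β hβ h
  by_contra hαβ
  have hdisj := disjoint_unitBlock hT hπ h0 hα hβ hαβ
  rw [← h] at hdisj
  exact ((hT.erase_zero_nonempty hπ).image _).ne_empty (disjoint_self.1 hdisj)

lemma idealBlock_notMem_image_unitBlock (hT : IsRepSystem π T)
    (hπ : IsSquareZeroUniformizer π) (h0 : (0 : R) ∈ T) :
    idealBlock π T ∉ T.image (unitBlock π T) := by
  intro h
  obtain ⟨α, -, hα⟩ := mem_image.1 h
  have hdisj := disjoint_unitBlock_idealBlock hT hπ h0 α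
  rw [hα] at hdisj
  exact ((hT.erase_zero_nonempty hπ).image _).ne_empty (disjoint_self.1 hdisj)

lemma card_differenceFamily (hT : IsRepSystem π T) (hπ : IsSquareZeroUniformizer π)
    (h0 : (0 : R) ∈ T) : #(differenceFamily π T) = #T + 1 := by
  rw [differenceFamily, card_union_of_disjoint
    (disjoint_singleton_right.2 (idealBlock_notMem_image_unitBlock hT hπ h0)),
    card_image_of_injOn (injOn_unitBlock hT hπ h0), card_singleton]

lemma card_of_mem_differenceFamily (hT : IsRepSystem π T) (hπ : IsSquareZeroUniformizer π)
    (h0 : (0 : R) ∈ T) {B : Finset R} (hB : B ∈ differenceFamily π T) : #B = #T - 1 := by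
  rcases mem_union.1 hB with hB | hB
  · obtain ⟨α, -, rfl⟩ := mem_image.1 hB
    exact card_unitBlock hπ h0 α
  · rw [mem_singleton.1 hB, card_idealBlock hT hπ h0]

lemma disjoint_of_mem_differenceFamily (hT : IsRepSystem π T)
    (hπ : IsSquareZeroUniformizer π) (h0 : (0 : R) ∈ T) {B B' : Finset R}
    (hB : B ∈ differenceFamily π T) (hB' : B' ∈ differenceFamily π T) (hBB' : B ≠ B') :
    Disjoint B B' := by
  simp only [differenceFamily, mem_union, mem_image, mem_singleton] at hB hB'
  rcases hB with ⟨α, hα, rfl⟩ | rfl <;> rcases hB' with ⟨β, hβ, rfl⟩ | rfl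
  · exact disjoint_unitBlock hT hπ h0 hα hβ fun h => hBB' (h ▸ rfl)
  · exact disjoint_unitBlock_idealBlock hT hπ h0 α
  · exact (disjoint_unitBlock_idealBlock hT hπ h0 β).symm
  · exact absurd rfl hBB'

lemma biUnion_differenceFamily [Fintype R] (hT : IsRepSystem π T)
    (hπ : IsSquareZeroUniformizer π) (h0 : (0 : R) ∈ T) :
    (differenceFamily π T).biUnion id = univ \ {0} := by
  ext x
  simp only [mem_biUnion, differenceFamily, mem_union, mem_image, mem_singleton, id,
    mem_sdiff, mem_univ, true_and]
  constructor
  · rintro ⟨B, ⟨α, -, rfl⟩ | rfl, hx⟩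
    · rintro rfl
      exact (hπ.isUnit_iff 0).1 (isUnit_of_mem_unitBlock hT hπ h0 hx) (dvd_zero π)
    · exact ne_zero_of_mem_idealBlock hT hπ h0 hx
  intro hx
  by_cases hπx : π ∣ x
  · obtain ⟨y, rfl⟩ := hπx
    have hy : ¬ π ∣ y := fun h => hx ((hπ.mul_eq_zero_iff y).2 h)
    obtain ⟨t, ht, hyt⟩ := hT.exists_dvd_sub y
    refine ⟨idealBlock π T, Or.inr rfl, mem_image.2 ⟨t, mem_erase.2 ⟨?_, ht⟩, ?_⟩⟩
    · rintro rfl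
      exact hy (by simpa using hyt)
    · exact (sub_eq_zero.1 (by rw [← mul_sub]; exact (hπ.mul_eq_zero_iff _).2 hyt)).symm
  · obtain ⟨t, ht, hxt⟩ := hT.exists_dvd_sub x
    have htS : t ∈ T.erase 0 :=
      mem_erase.2 ⟨by rintro rfl; exact hπx (by simpa using hxt), ht⟩
    have hα := hT.card_filter_one_add_mul_eq hπ
      ((hπ.isUnit_iff t).2 (hT.not_dvd_of_mem_erase_zero h0 htS)) x
    rw [if_pos (dvd_sub_comm.1 hxt), card_eq_one] at hα
    obtain ⟨α, hα⟩ := hα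
    obtain ⟨hαT, htx⟩ := mem_filter.1 (hα ▸ mem_singleton_self α)
    exact ⟨unitBlock π T α, Or.inl ⟨α, hαT, rfl⟩, mem_image.2 ⟨t, htS, htx⟩⟩

lemma sum_differenceFamily {M : Type*} [AddCommMonoid M] (hT : IsRepSystem π T)
    (hπ : IsSquareZeroUniformizer π) (h0 : (0 : R) ∈ T) (f : Finset R → M) :
    ∑ B ∈ differenceFamily π T, f B = ∑ α ∈ T, f (unitBlock π T α) + f (idealBlock π T) := by
  rw [differenceFamily, sum_union
    (disjoint_singleton_right.2 (idealBlock_notMem_image_unitBlock hT hπ h0)),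
    sum_image (injOn_unitBlock hT hπ h0), sum_singleton]

lemma diffCount_unitBlock (hπ : IsSquareZeroUniformizer π) (α x : R) :
    diffCount (unitBlock π T α) x =
      #{q ∈ T.erase 0 ×ˢ T.erase 0 | q.1 ≠ q.2 ∧ (1 + π * α) * (q.1 - q.2) = x} :=
  diffCount_image_mul (hπ.isUnit_one_add_mul α).mul_right_injective.injOn x

lemma diffCount_idealBlock (hT : IsRepSystem π T) (hπ : IsSquareZeroUniformizer π) (x : R) :
    diffCount (idealBlock π T) x =
      #{q ∈ T.erase 0 ×ˢ T.erase 0 | q.1 ≠ q.2 ∧ π * (q.1 - q.2) = x} :=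
  diffCount_image_mul (injOn_mul_erase_zero hT hπ) x

lemma sum_diffCount_unitBlock (hT : IsRepSystem π T) (hπ : IsSquareZeroUniformizer π) (x : R) :
    ∑ α ∈ T, diffCount (unitBlock π T α) x =
      #{q ∈ T.erase 0 ×ˢ T.erase 0 | q.1 ≠ q.2 ∧ π ∣ q.1 - q.2 - x} := by
  simp_rw [diffCount_unitBlock hπ]
  refine (sum_card_bipartiteAbove_eq_sum_card_bipartiteBelow
    (fun α (q : R × R) => q.1 ≠ q.2 ∧ (1 + π * α) * (q.1 - q.2) = x)).trans ?_
  rw [card_filter]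
  refine sum_congr rfl fun q hq => ?_
  rw [mem_product] at hq
  by_cases hne : q.1 = q.2
  · simp [bipartiteBelow, hne]
  · have hd : IsUnit (q.1 - q.2) := (hπ.isUnit_iff _).2
      (hT.not_dvd_sub (mem_of_mem_erase hq.1) (mem_of_mem_erase hq.2) hne)
    simpa [bipartiteBelow, hne] using hT.card_filter_one_add_mul_eq hπ hd x

lemma sum_diffCount_differenceFamily (hT : IsRepSystem π T) (hπ : IsSquareZeroUniformizer π)
    (h0 : (0 : R) ∈ T) {x : R} (hx : x ≠ 0) :
    ∑ B ∈ differenceFamily π T, diffCount B x = #T - 2 := by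
  rw [sum_differenceFamily hT hπ h0]
  by_cases hπx : π ∣ x
  · obtain ⟨y, rfl⟩ := hπx
    have hy : ¬ π ∣ y := fun h => hx ((hπ.mul_eq_zero_iff y).2 h)
    -- differences inside a unit block are units
    have hunitBlock : ∀ α ∈ T, diffCount (unitBlock π T α) (π * y) = 0 := by
      intro α _
      rw [diffCount_unitBlock hπ]
      refine card_eq_zero.2 (filter_eq_empty_iff.2 fun q hq ⟨hne, h⟩ => ?_)
      rw [mem_product] at hq
      have hd := hT.not_dvd_sub (mem_of_mem_erase hq.1) (mem_of_mem_erase hq.2) hne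
      exact (hπ.isUnit_iff _).1 ((hπ.isUnit_one_add_mul α).mul ((hπ.isUnit_iff _).2 hd))
        (h ▸ dvd_mul_right π y)
    rw [sum_eq_zero hunitBlock, zero_add, diffCount_idealBlock hT hπ,
      ← hT.card_pairs_dvd_sub_sub h0 hy]
    refine congrArg card (filter_congr fun q _ => ?_)
    rw [← hπ.mul_eq_zero_iff, mul_sub π (q.1 - q.2), sub_eq_zero]
  · have hidealBlock : diffCount (idealBlock π T) x = 0 := by
      rw [diffCount_idealBlock hT hπ]
      exact card_eq_zero.2 (filter_eq_empty_iff.2 fun q _ h => hπx (h.2 ▸ dvd_mul_right _ _))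
    rw [hidealBlock, add_zero, sum_diffCount_unitBlock hT hπ, hT.card_pairs_dvd_sub_sub h0 hπx]

end

/-- (Davis–Huczynska–Mullen) Let `T` be the Teichmüller set of the Galois ring
`R = GR(p², r)` and `T^* = T \ {0}`.  The collection
`E = {(1 + pα)T^* : α ∈ T} ∪ {pT^*}` is a near-complete `(p^{2r}, p^r - 1, p^r - 2)` disjoint
difference family in `(R, +)`: it consists of `p^r + 1` pairwise disjoint sets of size
`p^r - 1` partitioning `R \ {0}`, and every nonzero element of `R` occurs exactly `p^r - 2`
times in the union of the internal difference multisets of the sets in `E`. -/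
theorem stmt12 {R : Type*} [CommRing R] [Fintype R] [IsLocalRing R] [DecidableEq R]
    (p r : ℕ) (hp : p.Prime) (hr : 1 ≤ r)
    (hchar : CharP R (p ^ 2))
    (hmax : IsLocalRing.maximalIdeal R = Ideal.span {(p : R)})
    (hcard : Fintype.card R = p ^ (2 * r))
    (ξ : Rˣ) (hξ : orderOf ξ = p ^ r - 1)
    (Tstar T : Finset R) (E : Finset (Finset R))
    (hTstar : Tstar = (Finset.range (p ^ r - 1)).image (fun i => (ξ : R) ^ i))
    (hT : T = insert (0 : R) Tstar)
    (hE : E = (T.image (fun α => Tstar.image (fun t => (1 + (p : R) * α) * t)))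
              ∪ {Tstar.image (fun t => (p : R) * t)}) :
    E.card = p ^ r + 1 ∧
    (∀ B ∈ E, B.card = p ^ r - 1) ∧
    (∀ B ∈ E, ∀ B' ∈ E, B ≠ B' → Disjoint B B') ∧
    (E.biUnion id = Finset.univ \ {(0 : R)}) ∧
    (∀ x : R, x ≠ 0 → ∑ B ∈ E, diffCount B x = p ^ r - 2) := by
  have hπ : IsSquareZeroUniformizer (p : R) := .of_charP_sq hp.one_lt hmax
  have hcop : (orderOf ξ).Coprime p := hξ ▸ ((Nat.coprime_self_sub_left
    (Nat.one_le_pow _ _ hp.pos)).2 (Nat.coprime_one_left _)).coprime_dvd_right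
    (dvd_pow_self p (by omega))
  have hTξ : T = insert 0 ((range (orderOf ξ)).image fun i => (ξ : R) ^ i) := by
    rw [hT, hTstar, hξ]
  have hTcard : #T = p ^ r := by
    rw [hTξ, card_insert_zero_image_pow, hξ, Nat.sub_add_cancel (Nat.one_le_pow _ _ hp.pos)]
  have hrep : IsRepSystem (p : R) T := by
    refine .of_card_eq_sq hπ (fun a ha b hb => ?_) (by rw [hcard, hTcard, ← pow_mul, mul_comm])
    rw [hTξ] at ha hb
    exact eq_of_dvd_sub_of_mem_insert_zero_powers hπ hcop ha hb
  have h0 : (0 : R) ∈ T := hT ▸ mem_insert_self 0 Tstar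
  have hTstar' : Tstar = T.erase 0 := by
    rw [hT, erase_insert]
    simpa [hTstar] using fun i _ => (ξ.isUnit.pow i).ne_zero
  obtain rfl : E = differenceFamily (p : R) T := by rw [hE, hTstar']; rfl
  refine ⟨?_, fun B hB => ?_,
    fun B hB B' hB' => disjoint_of_mem_differenceFamily hrep hπ h0 hB hB',
    biUnion_differenceFamily hrep hπ h0, fun x hx => ?_⟩
  · rw [card_differenceFamily hrep hπ h0, hTcard]
  · rw [card_of_mem_differenceFamily hrep hπ h0 hB, hTcard]
  · rw [sum_diffCount_differenceFamily hrep hπ h0 hx, hTcard]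
end

section
/- In GR(4, r) with r ≥ 2, for each Teichmüller element α, the multiset Δ((1+2α)T^*) of differences of distinct elements of the coset (1+2α)T^* equals (as a set with all multiplicities 1) GR(4,r) \ (I ∪ (1+2α)T^* ∪ -(1+2α)T^*), where I = 2·GR(4,r). -/
open Finset

/-! Every `x` in `R = GR(4, r)` has a unique `2`-adic expansion `x = a + 2b` with `a, b` in the
Teichmüller set `T = {0} ∪ T*`, and in characteristic `4` the identity
`A² + B² = (A + B)² + 2AB` is such an expansion, because `(A + B)² ∈ T`. Squaring permutes `T`,
so an equation `t - t' = s - s'` in `T`, rewritten as `A² + B² = C² + D²` with `t = A²`,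
`s' = B²`, `s = C²`, `t' = D²`, yields `AB = CD` and `A + B ≡ C + D` modulo `2`; hence
`{A, B} ≡ {C, D}` in the residue field, and `(t, t') = (s, s')`. So the `|T|² - |T| = |R| - |I|`
differences of distinct elements of `T` are pairwise distinct units: each unit occurs exactly
once. Deleting `0` from `T` deletes exactly the differences `±t` with `t ∈ T*`, and multiplication
by the involution `1 + 2α` is an additive automorphism of `R` carrying `T*` onto `(1 + 2α)T*`. -/

open IsLocalRing

section DiffCount

variable {G : Type*} [AddCommGroup G] [DecidableEq G]

theorem diffCount_eq_card_filter_offDiag (A : Finset G) (x : G) :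
    diffCount A x = (A.offDiag.filter fun p => p.1 - p.2 = x).card := by
  unfold diffCount
  congr 1
  ext p
  simp only [mem_filter, mem_product, mem_offDiag, and_assoc]

theorem diffCount_insert {A : Finset G} {a : G} (ha : a ∉ A) (x : G) :
    diffCount (insert a A) x =
      diffCount A x + (if a - x ∈ A then 1 else 0) + (if a + x ∈ A then 1 else 0) := by
  have hleft : (({a} ×ˢ A).filter fun p => p.1 - p.2 = x) =
      if a - x ∈ A then {(a, a - x)} else ∅ := by
    ext ⟨b, c⟩
    simp only [mem_filter, mem_product, mem_singleton]
    split_ifs with h <;> simp only [mem_singleton, Prod.mk.injEq, notMem_empty, iff_false]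
    · constructor
      · rintro ⟨⟨rfl, -⟩, rfl⟩
        exact ⟨rfl, (sub_sub_cancel _ _).symm⟩
      · rintro ⟨rfl, rfl⟩
        exact ⟨⟨rfl, h⟩, sub_sub_cancel _ _⟩
    · rintro ⟨⟨rfl, hc⟩, rfl⟩
      exact h (by rwa [sub_sub_cancel])
  have hright : ((A ×ˢ {a}).filter fun p => p.1 - p.2 = x) =
      if a + x ∈ A then {(a + x, a)} else ∅ := by
    ext ⟨b, c⟩
    simp only [mem_filter, mem_product, mem_singleton]
    split_ifs with h <;> simp only [mem_singleton, Prod.mk.injEq, notMem_empty, iff_false]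
    · constructor
      · rintro ⟨⟨-, rfl⟩, rfl⟩
        exact ⟨(add_sub_cancel _ _).symm, rfl⟩
      · rintro ⟨rfl, rfl⟩
        exact ⟨⟨h, rfl⟩, add_sub_cancel_left _ _⟩
    · rintro ⟨⟨hb, rfl⟩, rfl⟩
      exact h (by rwa [add_sub_cancel])
  have hdisj₁ : Disjoint A.offDiag ({a} ×ˢ A) := disjoint_left.mpr fun p hp hp' =>
    ha ((mem_singleton.mp (mem_product.mp hp').1) ▸ (mem_offDiag.mp hp).1)
  have hdisj₂ : Disjoint (A.offDiag ∪ {a} ×ˢ A) (A ×ˢ {a}) := by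
    refine disjoint_left.mpr fun p hp hp' => ?_
    have hp₂ : p.2 = a := mem_singleton.mp (mem_product.mp hp').2
    rcases mem_union.mp hp with hp | hp
    · exact ha (hp₂ ▸ (mem_offDiag.mp hp).2.1)
    · exact ha (hp₂ ▸ (mem_product.mp hp).2)
  rw [diffCount_eq_card_filter_offDiag, diffCount_eq_card_filter_offDiag, offDiag_insert ha,
    filter_union, card_union_of_disjoint (disjoint_filter_filter hdisj₂), filter_union,
    card_union_of_disjoint (disjoint_filter_filter hdisj₁), hleft, hright]
  split_ifs <;> rfl

theorem diffCount_image {H : Type*} [AddCommGroup H] [DecidableEq H] (f : G →+ H)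
    (hf : Function.Injective f) (A : Finset G) (x : G) :
    diffCount (A.image f) (f x) = diffCount A x := by
  rw [diffCount_eq_card_filter_offDiag, diffCount_eq_card_filter_offDiag]
  have : ((A.image f).offDiag.filter fun p => p.1 - p.2 = f x) =
      (A.offDiag.filter fun p => p.1 - p.2 = x).image (Prod.map f f) := by
    ext ⟨b, c⟩
    simp only [mem_filter, mem_offDiag, mem_image, Prod.exists, Prod.map, Prod.mk.injEq]
    constructor
    · rintro ⟨⟨⟨b, hb, rfl⟩, ⟨c, hc, rfl⟩, hne⟩, hbc⟩
      exact ⟨b, c, ⟨⟨hb, hc, fun h => hne (h ▸ rfl)⟩, hf (by rw [map_sub, hbc])⟩,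
        rfl, rfl⟩
    · rintro ⟨b, c, ⟨⟨hb, hc, hne⟩, hbc⟩, rfl, rfl⟩
      exact ⟨⟨⟨b, hb, rfl⟩, ⟨c, hc, rfl⟩, hf.ne hne⟩, by rw [← map_sub, hbc]⟩
  rw [this, card_image_of_injective _ (Prod.map_injective.mpr ⟨hf, hf⟩)]

end DiffCount

section Involution

variable {R : Type*} [Ring R] [DecidableEq R] {u : R}

theorem mem_image_mul_left_iff (hu : u * u = 1) (A : Finset R) (y : R) :
    y ∈ A.image (u * ·) ↔ u * y ∈ A := by
  have hux : u * (u * y) = y := by rw [← mul_assoc, hu, one_mul]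
  refine ⟨fun h => ?_, fun h => mem_image.mpr ⟨_, h, hux⟩⟩
  obtain ⟨t, ht, rfl⟩ := mem_image.mp h
  rwa [← mul_assoc, hu, one_mul]

theorem diffCount_image_mul_left (hu : u * u = 1) (A : Finset R) (x : R) :
    diffCount (A.image (u * ·)) x = diffCount A (u * x) := by
  have hux : ∀ y, u * (u * y) = y := fun y => by rw [← mul_assoc, hu, one_mul]
  have hinj : Function.Injective (AddMonoidHom.mulLeft u) := fun y z h => by
    rw [← hux y, ← hux z]
    exact congrArg (u * ·) h
  simpa only [AddMonoidHom.coe_mulLeft, hux] using diffCount_image _ hinj A (u * x)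

end Involution

section CharFour

variable {R : Type*} [CommRing R] [CharP R 4]

theorem add_two_mul_sq (x y : R) : (x + 2 * y) ^ 2 = x ^ 2 := by
  linear_combination (x * y + y ^ 2) * CharP.ofNat_eq_zero R 4

theorem sq_eq_sq_of_sub_mem_span_two {x y : R} (h : x - y ∈ Ideal.span {(2 : R)}) :
    x ^ 2 = y ^ 2 := by
  obtain ⟨c, hc⟩ := Ideal.mem_span_singleton'.mp h
  rw [show x = y + 2 * c by linear_combination -hc, add_two_mul_sq]

theorem two_ne_zero_of_charP_four : (2 : R) ≠ 0 := by
  intro h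
  have := (CharP.cast_eq_zero_iff R 4 2).mp (mod_cast h)
  norm_num at this

variable [IsLocalRing R]

theorem two_mem_maximalIdeal : (2 : R) ∈ maximalIdeal R := by
  rw [mem_maximalIdeal, mem_nonunits_iff]
  intro h
  have h4 : IsUnit ((2 : R) * 2) := h.mul h
  rw [show (2 : R) * 2 = 4 by norm_num, CharP.ofNat_eq_zero R 4] at h4
  exact not_isUnit_zero h4

theorem mem_maximalIdeal_of_two_mul_eq_zero {x : R} (hx : 2 * x = 0) : x ∈ maximalIdeal R := by
  by_contra h
  obtain ⟨v, hv⟩ := (notMem_maximalIdeal.mp h).exists_right_inv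
  exact two_ne_zero_of_charP_four (by linear_combination v * hx - 2 * hv)

theorem sub_mem_maximalIdeal_of_sq_eq_sq {x y : R} (h : x ^ 2 = y ^ 2) :
    x - y ∈ maximalIdeal R := by
  apply (maximalIdeal.isMaximal R).isPrime.mem_of_pow_mem 2
  rw [show (x - y) ^ 2 = -(2 * (y * (x - y))) by linear_combination h]
  exact neg_mem (Ideal.mul_mem_right _ _ two_mem_maximalIdeal)

end CharFour

structure IsTeichmullerSystem {R : Type*} [CommRing R] [IsLocalRing R] [Fintype R]
    (T : Finset R) : Prop where
  zero_mem : (0 : R) ∈ T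
  mul_mem : ∀ a ∈ T, ∀ b ∈ T, a * b ∈ T
  eq_of_sub_mem : ∀ a ∈ T, ∀ b ∈ T, a - b ∈ maximalIdeal R → a = b
  card_sq : T.card ^ 2 = Fintype.card R

namespace IsTeichmullerSystem

variable {R : Type*} [CommRing R] [IsLocalRing R] [Fintype R] {T : Finset R}

theorem isUnit_sub (hT : IsTeichmullerSystem T) {a b : R} (ha : a ∈ T) (hb : b ∈ T)
    (hab : a ≠ b) : IsUnit (a - b) :=
  notMem_maximalIdeal.mp fun h => hab (hT.eq_of_sub_mem a ha b hb h)

variable [CharP R 4]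

theorem eq_and_eq_of_add_two_mul_eq (hT : IsTeichmullerSystem T) {a b a' b' : R} (ha : a ∈ T)
    (hb : b ∈ T) (ha' : a' ∈ T) (hb' : b' ∈ T) (h : a + 2 * b = a' + 2 * b') :
    a = a' ∧ b = b' := by
  obtain rfl : a = a' := hT.eq_of_sub_mem a ha a' ha' <| by
    rw [show a - a' = 2 * (b' - b) by linear_combination h]
    exact Ideal.mul_mem_right _ _ two_mem_maximalIdeal
  exact ⟨rfl, hT.eq_of_sub_mem b hb b' hb'
    (mem_maximalIdeal_of_two_mul_eq_zero (by linear_combination h))⟩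

theorem exists_eq_add_two_mul (hT : IsTeichmullerSystem T) (x : R) :
    ∃ a ∈ T, ∃ b ∈ T, a + 2 * b = x := by
  classical
  have himage : (T ×ˢ T).image (fun p => p.1 + 2 * p.2) = univ := by
    refine eq_univ_of_card _ ?_
    rw [card_image_of_injOn, card_product, ← sq, hT.card_sq]
    rintro ⟨a, b⟩ hab ⟨a', b'⟩ hab' h
    simp only [coe_product, Set.mem_prod, mem_coe] at hab hab'
    obtain ⟨rfl, rfl⟩ := hT.eq_and_eq_of_add_two_mul_eq hab.1 hab.2 hab'.1 hab'.2 h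
    rfl
  obtain ⟨⟨a, b⟩, hab, rfl⟩ := mem_image.mp (himage ▸ mem_univ x)
  exact ⟨a, (mem_product.mp hab).1, b, (mem_product.mp hab).2, rfl⟩

theorem sq_mem (hT : IsTeichmullerSystem T) (x : R) : x ^ 2 ∈ T := by
  obtain ⟨a, ha, b, -, rfl⟩ := hT.exists_eq_add_two_mul x
  rw [add_two_mul_sq, sq]
  exact hT.mul_mem a ha a ha

theorem exists_sq_eq (hT : IsTeichmullerSystem T) {t : R} (ht : t ∈ T) :
    ∃ s ∈ T, s ^ 2 = t := by
  classical
  have hinj : Set.InjOn (· ^ 2) (T : Set R) := fun a ha b hb h =>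
    hT.eq_of_sub_mem a ha b hb (sub_mem_maximalIdeal_of_sq_eq_sq h)
  have himage : T.image (· ^ 2) = T :=
    eq_of_subset_of_card_le
      (fun _ hx => by obtain ⟨s, -, rfl⟩ := mem_image.mp hx; exact hT.sq_mem s)
      (card_image_of_injOn hinj).ge
  exact mem_image.mp (himage.symm ▸ ht)

theorem sub_injOn_offDiag (hT : IsTeichmullerSystem T) :
    Set.InjOn (fun p : R × R => p.1 - p.2) T.offDiag := by
  rintro ⟨t, t'⟩ hp ⟨s, s'⟩ hq (hdiff : t - t' = s - s')
  simp only [coe_offDiag, Set.mem_offDiag, mem_coe] at hp hq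
  obtain ⟨A, hA, rfl⟩ := hT.exists_sq_eq hp.1
  obtain ⟨D, hD, rfl⟩ := hT.exists_sq_eq hp.2.1
  obtain ⟨C, hC, rfl⟩ := hT.exists_sq_eq hq.1
  obtain ⟨B, hB, rfl⟩ := hT.exists_sq_eq hq.2.1
  have hexp : (A + B) ^ 2 + 2 * (A * B) = (C + D) ^ 2 + 2 * (C * D) := by
    linear_combination hdiff + (A * B - C * D) * CharP.ofNat_eq_zero R 4
  obtain ⟨hsq, hprod⟩ := hT.eq_and_eq_of_add_two_mul_eq (hT.sq_mem _)
    (hT.mul_mem A hA B hB) (hT.sq_mem _) (hT.mul_mem C hC D hD) hexp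
  have hroots : (C - A) * (C - B) ∈ maximalIdeal R := by
    rw [show (C - A) * (C - B) = -(C * (A + B - (C + D))) by linear_combination hprod]
    exact neg_mem (Ideal.mul_mem_left _ _ (sub_mem_maximalIdeal_of_sq_eq_sq hsq))
  rcases (maximalIdeal.isMaximal R).isPrime.mem_or_mem hroots with h | h
  · obtain rfl := hT.eq_of_sub_mem C hC A hA h
    simp only [Prod.mk.injEq, true_and]
    linear_combination -hdiff
  · obtain rfl := hT.eq_of_sub_mem C hC B hB h
    exact absurd rfl hq.2.2

variable [DecidableEq R]

theorem card_filter_isUnit (hT : IsTeichmullerSystem T) :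
    (univ.filter fun x : R => IsUnit x).card = T.card ^ 2 - T.card := by
  have himage : T.image (2 * ·) = univ.filter fun x : R => ¬IsUnit x := by
    refine Subset.antisymm (fun x hx => ?_) (fun x hx => ?_)
    · obtain ⟨b, -, rfl⟩ := mem_image.mp hx
      exact mem_filter.mpr ⟨mem_univ _, fun h => two_mem_maximalIdeal
        (isUnit_of_mul_isUnit_left h)⟩
    · obtain ⟨a, ha, b, hb, rfl⟩ := hT.exists_eq_add_two_mul x
      have hx' : a + 2 * b ∈ maximalIdeal R := (mem_filter.mp hx).2
      obtain rfl : a = 0 := hT.eq_of_sub_mem a ha 0 hT.zero_mem <| by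
        simpa using sub_mem hx' (Ideal.mul_mem_right b _ two_mem_maximalIdeal)
      exact mem_image.mpr ⟨b, hb, (zero_add _).symm⟩
  have hcard : (univ.filter fun x : R => ¬IsUnit x).card = T.card := by
    rw [← himage, card_image_of_injOn fun b hb b' hb' h =>
      (hT.eq_and_eq_of_add_two_mul_eq hT.zero_mem hb hT.zero_mem hb' (by simpa using h)).2]
  have := card_filter_add_card_filter_not (s := univ) (p := fun x : R => IsUnit x)
  rw [hcard, card_univ, ← hT.card_sq] at this
  omega

theorem image_sub_offDiag (hT : IsTeichmullerSystem T) :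
    T.offDiag.image (fun p => p.1 - p.2) = univ.filter fun x : R => IsUnit x := by
  refine eq_of_subset_of_card_le (fun x hx => ?_) ?_
  · obtain ⟨⟨a, b⟩, hab, rfl⟩ := mem_image.mp hx
    obtain ⟨ha, hb, hne⟩ := mem_offDiag.mp hab
    exact mem_filter.mpr ⟨mem_univ _, hT.isUnit_sub ha hb hne⟩
  · rw [hT.card_filter_isUnit, card_image_of_injOn hT.sub_injOn_offDiag, offDiag_card, sq]

theorem diffCount_eq (hT : IsTeichmullerSystem T) (y : R) :
    diffCount T y = if IsUnit y then 1 else 0 := by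
  rw [diffCount_eq_card_filter_offDiag]
  split_ifs with hy
  · obtain ⟨p, hp, rfl⟩ :=
      mem_image.mp (hT.image_sub_offDiag ▸ mem_filter.mpr ⟨mem_univ y, hy⟩)
    refine card_eq_one.mpr ⟨p, eq_singleton_iff_unique_mem.mpr ⟨mem_filter.mpr ⟨hp, rfl⟩,
      fun q hq => hT.sub_injOn_offDiag (mem_filter.mp hq).1 hp (mem_filter.mp hq).2⟩⟩
  · refine card_eq_zero.mpr (filter_eq_empty_iff.mpr fun p hp hpy => hy ?_)
    obtain ⟨ha, hb, hne⟩ := mem_offDiag.mp hp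
    exact hpy ▸ hT.isUnit_sub ha hb hne

theorem diffCount_eq_of_insert_zero {S : Finset R} (hT : IsTeichmullerSystem (insert 0 S))
    (h0 : (0 : R) ∉ S) (y : R) :
    diffCount S y = if IsUnit y ∧ y ∉ S ∧ -y ∉ S then 1 else 0 := by
  have h := hT.diffCount_eq y
  rw [diffCount_insert h0, zero_sub, zero_add] at h
  split_ifs at h ⊢ <;> first | omega | tauto

end IsTeichmullerSystem

theorem sq_injOn_powers {M : Type*} [Monoid M] {x : M} (hx : Odd (orderOf x)) :
    Set.InjOn (· ^ 2) (Submonoid.powers x : Set M) := by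
  obtain ⟨k, hk⟩ := hx
  have hsqrt : ∀ a ∈ Submonoid.powers x, (a ^ 2) ^ (k + 1) = a := by
    rintro _ ⟨i, rfl⟩
    rw [← pow_mul, ← pow_mul, show i * (2 * (k + 1)) = orderOf x * i + i by rw [hk]; ring,
      pow_add, pow_mul, pow_orderOf_eq_one, one_pow, one_mul]
  intro a ha b hb (h : a ^ 2 = b ^ 2)
  rw [← hsqrt a ha, ← hsqrt b hb, h]

theorem zero_notMem_image_range_orderOf {M : Type*} [MonoidWithZero M] [Nontrivial M]
    [DecidableEq M] {x : M} (hx : IsOfFinOrder x) :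
    (0 : M) ∉ (range (orderOf x)).image (x ^ ·) := fun h => by
  obtain ⟨i, -, hi⟩ := mem_image.mp h
  exact not_isUnit_zero (hi ▸ hx.isUnit.pow i)

theorem isTeichmullerSystem_insert_zero_image_range_orderOf {R : Type*} [CommRing R]
    [IsLocalRing R] [Fintype R] [CharP R 4] [DecidableEq R]
    (hmax : maximalIdeal R = Ideal.span {(2 : R)}) {x : R} (hx : Odd (orderOf x))
    (hcard : Fintype.card R = (orderOf x + 1) ^ 2) :
    IsTeichmullerSystem (insert 0 ((range (orderOf x)).image (x ^ ·))) := by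
  have hfin : IsOfFinOrder x := orderOf_pos_iff.mp hx.pos
  have hmem : ∀ y, y ∈ insert 0 ((range (orderOf x)).image (x ^ ·)) ↔
      y = 0 ∨ y ∈ Submonoid.powers x := fun y => by
    rw [mem_insert, hfin.mem_powers_iff_mem_range_orderOf]
  have hunit : ∀ y ∈ Submonoid.powers x, y ∉ maximalIdeal R := by
    rintro _ ⟨i, rfl⟩
    exact notMem_maximalIdeal.mpr (hfin.isUnit.pow i)
  refine ⟨mem_insert_self _ _, fun a ha b hb => ?_, fun a ha b hb hab => ?_, ?_⟩
  · rw [hmem] at ha hb ⊢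
    rcases ha with rfl | ha
    · exact .inl (zero_mul b)
    rcases hb with rfl | hb
    · exact .inl (mul_zero a)
    · exact .inr (mul_mem ha hb)
  · rw [hmem] at ha hb
    rcases ha with rfl | ha <;> rcases hb with rfl | hb
    · rfl
    · exact absurd (by simpa using hab) (hunit b hb)
    · exact absurd (by simpa using hab) (hunit a ha)
    · exact sq_injOn_powers hx ha hb (sq_eq_sq_of_sub_mem_span_two (hmax ▸ hab))
  · rw [card_insert_of_notMem (zero_notMem_image_range_orderOf hfin),
      card_image_of_injOn (by simpa using pow_injOn_Iio_orderOf), card_range, hcard]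

open scoped Classical in
theorem stmt15_general {R : Type*} [CommRing R] [Fintype R] [IsLocalRing R] [DecidableEq R]
    (r : ℕ)
    (hchar : CharP R 4)
    (hmax : IsLocalRing.maximalIdeal R = Ideal.span {(2 : R)})
    (hcard : Fintype.card R = 4 ^ r)
    (ξ : Rˣ) (hξ : orderOf ξ = 2 ^ r - 1)
    (Tstar T : Finset R)
    (hTstar : Tstar = (Finset.range (2 ^ r - 1)).image (fun i => (ξ : R) ^ i)) :
    ∀ α ∈ T, ∀ x : R,
      diffCount (Tstar.image (fun t => (1 + 2 * α) * t)) x =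
        if x ∉ Ideal.span {(2 : R)}
            ∧ x ∉ Tstar.image (fun t => (1 + 2 * α) * t)
            ∧ -x ∉ Tstar.image (fun t => (1 + 2 * α) * t)
        then 1 else 0 := by
  intro α _ x
  have hr0 : r ≠ 0 := by rintro rfl; exact (orderOf_pos ξ).ne' hξ
  have hodd : Odd (2 ^ r - 1) :=
    Nat.Even.sub_odd Nat.one_le_two_pow (Nat.even_pow.mpr ⟨even_two, hr0⟩) odd_one
  have hcard' : Fintype.card R = (2 ^ r - 1 + 1) ^ 2 := by
    rw [Nat.sub_add_cancel Nat.one_le_two_pow, hcard, ← pow_mul, mul_comm, pow_mul]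
    norm_num
  have hfin : IsOfFinOrder (ξ : R) := Units.isOfFinOrder_val.mpr (isOfFinOrder_of_finite ξ)
  rw [← orderOf_units] at hξ
  rw [← hξ] at hTstar hodd hcard'
  have hTeich : IsTeichmullerSystem (insert 0 Tstar) :=
    hTstar ▸ isTeichmullerSystem_insert_zero_image_range_orderOf hmax hodd hcard'
  have h0 : (0 : R) ∉ Tstar := hTstar ▸ zero_notMem_image_range_orderOf hfin
  have hu : (1 + 2 * α) * (1 + 2 * α) = 1 := by
    linear_combination (α + α ^ 2) * CharP.ofNat_eq_zero R 4
  rw [diffCount_image_mul_left hu, hTeich.diffCount_eq_of_insert_zero h0]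
  simp only [← hmax, notMem_maximalIdeal, mem_image_mul_left_iff hu, mul_neg,
    (⟨_, _, hu, hu⟩ : Rˣ).isUnit_units_mul]

open scoped Classical in
/-- In `GR(4, r)` with `r ≥ 2`, for each Teichmüller element `α`, the multiset of
differences of distinct elements of the coset `(1+2α)T^*` equals, with all multiplicities `1`,
the set `GR(4,r) \ (I ∪ (1+2α)T^* ∪ -(1+2α)T^*)`, where `I = 2·GR(4,r)`. -/
theorem stmt15 {R : Type*} [CommRing R] [Fintype R] [IsLocalRing R] [DecidableEq R]
    (r : ℕ) (hr : 2 ≤ r)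
    (hchar : CharP R 4)
    (hmax : IsLocalRing.maximalIdeal R = Ideal.span {(2 : R)})
    (hcard : Fintype.card R = 4 ^ r)
    (ξ : Rˣ) (hξ : orderOf ξ = 2 ^ r - 1)
    (Tstar T : Finset R)
    (hTstar : Tstar = (Finset.range (2 ^ r - 1)).image (fun i => (ξ : R) ^ i))
    (hT : T = insert (0 : R) Tstar) :
    ∀ α ∈ T, ∀ x : R,
      diffCount (Tstar.image (fun t => (1 + 2 * α) * t)) x =
        if x ∉ Ideal.span {(2 : R)}
            ∧ x ∉ Tstar.image (fun t => (1 + 2 * α) * t)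
            ∧ -x ∉ Tstar.image (fun t => (1 + 2 * α) * t)
        then 1 else 0 :=
  stmt15_general r hchar hmax hcard ξ hξ Tstar T hTstar
end

section
/- In GR(4, r) with r ≥ 2, consider the multiset Δ_+ T^* = {β + γ : β, γ ∈ T^*, β ≠ -γ} of sums of elements of the Teichmüller group (note -γ ∉ T^* for γ ∈ T^* here since characteristic is 4, so all ordered pairs are counted). Then every element of Δ_+ T^* that is a unit has multiplicity exactly 2, and every element of Δ_+ T^* lying in I \ {0} (where I = 2·GR(4,r)) has multiplicity exactly 1. -/
open Finset

/-- Multiplicity of `x` in the sum multiset `Δ₊A = {a + a' : a, a' ∈ A, a ≠ -a'}`, counting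
ordered pairs. -/
def sumCount {G : Type*} [AddCommGroup G] [DecidableEq G] (A : Finset G) (x : G) : ℕ :=
  ((A ×ˢ A).filter (fun q => q.1 ≠ -q.2 ∧ q.1 + q.2 = x)).card

/-!
Every Teichmüller element `t` satisfies `t ^ 2 ^ r = t`, and in characteristic `4` the binomial
expansion of `(a + b) ^ 2 ^ r` collapses to `a ^ 2 ^ r + b ^ 2 ^ r + 2 (a b) ^ 2 ^ (r - 1)`.
For Teichmüller elements `a`, `b` the sum `a + b` therefore determines `2 (a b) ^ 2 ^ (r - 1)`,
and since doubling and squaring are injective on Teichmüller elements it determines `a b`.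
Knowing sum and product, `(a' - a) (a' - b) = 0` for any other representation `a' + b'`:
either `a' - a` is a unit and `a' = b`, or `a' - a ∈ I = (2)` and `a' = a`, because Teichmüller
elements congruent modulo `2` have equal squares. So `a + b` is represented exactly by `(a, b)`
and `(b, a)`, which coincide precisely when `a + b = 2a ∈ I`.
-/

section CharFour

variable {R : Type*} [CommRing R]

theorem add_pow_two_pow_succ_of_four_eq_zero (h4 : (4 : R) = 0) (a b : R) (n : ℕ) :
    (a + b) ^ 2 ^ (n + 1) = a ^ 2 ^ (n + 1) + b ^ 2 ^ (n + 1) + 2 * (a * b) ^ 2 ^ n := by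
  induction n with
  | zero => ring
  | succ n ih =>
    set A := a ^ 2 ^ (n + 1)
    set B := b ^ 2 ^ (n + 1)
    set C := (a * b) ^ 2 ^ n
    calc (a + b) ^ 2 ^ (n + 1 + 1) = (A + B + 2 * C) ^ 2 := by rw [pow_succ, pow_mul, ih]
      _ = A ^ 2 + B ^ 2 + 2 * (A * B) := by linear_combination (C ^ 2 + A * C + B * C) * h4
      _ = a ^ 2 ^ (n + 1 + 1) + b ^ 2 ^ (n + 1 + 1) + 2 * (a * b) ^ 2 ^ (n + 1) := by
        simp only [A, B, ← mul_pow, ← pow_mul, ← pow_succ]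

theorem pow_two_pow_succ_eq_sq_pow (x : R) (n : ℕ) : x ^ 2 ^ (n + 1) = (x ^ 2) ^ 2 ^ n := by
  rw [pow_succ', pow_mul]

theorem eq_of_sq_eq_of_pow_two_pow_eq_self {n : ℕ} {s t : R} (hs : s ^ 2 ^ (n + 1) = s)
    (ht : t ^ 2 ^ (n + 1) = t) (h : s ^ 2 = t ^ 2) : s = t := by
  rw [← hs, ← ht, pow_two_pow_succ_eq_sq_pow, pow_two_pow_succ_eq_sq_pow, h]

theorem eq_of_two_dvd_sub_of_pow_two_pow_eq_self (h4 : (4 : R) = 0) {n : ℕ} {s t : R}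
    (hs : s ^ 2 ^ (n + 1) = s) (ht : t ^ 2 ^ (n + 1) = t) (h : 2 ∣ s - t) : s = t := by
  obtain ⟨c, hc⟩ := h
  refine eq_of_sq_eq_of_pow_two_pow_eq_self hs ht ?_
  linear_combination (s + t + 2 * c) * hc + (c ^ 2 + c * t) * h4

variable [IsLocalRing R]

theorem two_dvd_of_not_isUnit (hmax : IsLocalRing.maximalIdeal R = Ideal.span {(2 : R)})
    {x : R} (hx : ¬IsUnit x) : 2 ∣ x := by
  rwa [← Ideal.mem_span_singleton, ← hmax, IsLocalRing.mem_maximalIdeal]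

theorem not_isUnit_two (hmax : IsLocalRing.maximalIdeal R = Ideal.span {(2 : R)}) :
    ¬IsUnit (2 : R) :=
  (IsLocalRing.mem_maximalIdeal _).mp (hmax ▸ Ideal.mem_span_singleton_self 2)

theorem eq_of_two_mul_eq_of_pow_two_pow_eq_self (h4 : (4 : R) = 0) (h2 : (2 : R) ≠ 0)
    (hmax : IsLocalRing.maximalIdeal R = Ideal.span {(2 : R)}) {n : ℕ} {s t : R}
    (hs : s ^ 2 ^ (n + 1) = s) (ht : t ^ 2 ^ (n + 1) = t) (h : 2 * s = 2 * t) : s = t := by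
  by_cases hu : IsUnit (s - t)
  · exact absurd ((hu.mul_left_eq_zero).mp (by linear_combination h)) h2
  · exact eq_of_two_dvd_sub_of_pow_two_pow_eq_self h4 hs ht (two_dvd_of_not_isUnit hmax hu)

theorem mul_eq_mul_of_add_eq_add_of_pow_two_pow_eq_self (h4 : (4 : R) = 0) (h2 : (2 : R) ≠ 0)
    (hmax : IsLocalRing.maximalIdeal R = Ideal.span {(2 : R)}) {n : ℕ} {a b a' b' : R}
    (ha : a ^ 2 ^ (n + 1) = a) (hb : b ^ 2 ^ (n + 1) = b)
    (ha' : a' ^ 2 ^ (n + 1) = a') (hb' : b' ^ 2 ^ (n + 1) = b') (h : a + b = a' + b') :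
    a * b = a' * b' := by
  have hab : (a * b) ^ 2 ^ (n + 1) = a * b := by rw [mul_pow, ha, hb]
  have hab' : (a' * b') ^ 2 ^ (n + 1) = a' * b' := by rw [mul_pow, ha', hb']
  have hsum := add_pow_two_pow_succ_of_four_eq_zero h4 a b n
  have hsum' := add_pow_two_pow_succ_of_four_eq_zero h4 a' b' n
  rw [ha, hb] at hsum
  rw [ha', hb'] at hsum'
  have hroot : (a * b) ^ 2 ^ n = (a' * b') ^ 2 ^ n := by
    refine eq_of_two_mul_eq_of_pow_two_pow_eq_self h4 h2 hmax (n := n)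
      (by rw [pow_right_comm, hab]) (by rw [pow_right_comm, hab']) ?_
    rw [h] at hsum
    linear_combination hsum' - hsum
  rw [← hab, ← hab', pow_succ, pow_mul, pow_mul, hroot]

theorem eq_or_eq_swap_of_add_eq_add_of_pow_two_pow_eq_self (h4 : (4 : R) = 0)
    (h2 : (2 : R) ≠ 0) (hmax : IsLocalRing.maximalIdeal R = Ideal.span {(2 : R)}) {n : ℕ}
    {a b a' b' : R} (ha : a ^ 2 ^ (n + 1) = a) (hb : b ^ 2 ^ (n + 1) = b)
    (ha' : a' ^ 2 ^ (n + 1) = a') (hb' : b' ^ 2 ^ (n + 1) = b') (h : a' + b' = a + b) :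
    (a', b') = (a, b) ∨ (a', b') = (b, a) := by
  have hprod := mul_eq_mul_of_add_eq_add_of_pow_two_pow_eq_self h4 h2 hmax ha' hb' ha hb h
  have hzero : (a' - a) * (a' - b) = 0 := by linear_combination a' * h - hprod
  by_cases hu : IsUnit (a' - a)
  · have h1 : a' = b := sub_eq_zero.mp (hu.mul_right_eq_zero.mp hzero)
    exact Or.inr (by rw [h1, show b' = a by linear_combination h - h1])
  · have h1 : a' = a :=
      eq_of_two_dvd_sub_of_pow_two_pow_eq_self h4 ha' ha (two_dvd_of_not_isUnit hmax hu)
    exact Or.inl (by rw [h1, show b' = b by linear_combination h - h1])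

theorem sumCount_add_eq_card_pair [DecidableEq R] (h4 : (4 : R) = 0) (h2 : (2 : R) ≠ 0)
    (hmax : IsLocalRing.maximalIdeal R = Ideal.span {(2 : R)}) {n : ℕ} {T : Finset R}
    (hT : ∀ t ∈ T, t ^ 2 ^ (n + 1) = t) {a b : R} (ha : a ∈ T) (hb : b ∈ T)
    (hab : a + b ≠ 0) : sumCount T (a + b) = #{(a, b), (b, a)} := by
  unfold sumCount
  congr 1
  ext ⟨a', b'⟩
  simp only [mem_filter, mem_product, mem_insert, mem_singleton, ne_eq,
    ← add_eq_zero_iff_eq_neg]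
  constructor
  · rintro ⟨⟨ha', hb'⟩, -, hsum⟩
    exact eq_or_eq_swap_of_add_eq_add_of_pow_two_pow_eq_self h4 h2 hmax (hT a ha) (hT b hb)
      (hT a' ha') (hT b' hb') hsum
  · rintro (h | h) <;> obtain ⟨rfl, rfl⟩ := Prod.mk.inj h
    · exact ⟨⟨ha, hb⟩, hab, rfl⟩
    · exact ⟨⟨hb, ha⟩, by rwa [add_comm], add_comm _ _⟩

end CharFour

theorem pow_pow_eq_self_of_orderOf_dvd {M : Type*} [Monoid M] {x : M} {q : ℕ} (hq : 1 ≤ q)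
    (h : orderOf x ∣ q - 1) (i : ℕ) : (x ^ i) ^ q = x ^ i := by
  rw [pow_right_comm, ← Nat.sub_add_cancel hq, pow_succ, orderOf_dvd_iff_pow_eq_one.mp h, one_mul]

open scoped Classical in
theorem stmt16_general {R : Type*} [CommRing R] [IsLocalRing R] [DecidableEq R]
    (r : ℕ)
    (hchar : CharP R 4)
    (hmax : IsLocalRing.maximalIdeal R = Ideal.span {(2 : R)})
    (ξ : Rˣ) (hξ : orderOf ξ = 2 ^ r - 1)
    (Tstar : Finset R)
    (hTstar : Tstar = (Finset.range (2 ^ r - 1)).image (fun i => (ξ : R) ^ i)) :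
    ∀ x : R, 0 < sumCount Tstar x →
      (IsUnit x → sumCount Tstar x = 2) ∧
      (x ∈ Ideal.span {(2 : R)} → x ≠ 0 → sumCount Tstar x = 1) := by
  intro x hpos
  obtain ⟨⟨a, b⟩, hab⟩ := card_pos.mp hpos
  simp only [mem_filter, mem_product, ne_eq, ← add_eq_zero_iff_eq_neg] at hab
  obtain ⟨⟨ha, hb⟩, hab0, rfl⟩ := hab
  obtain _ | n := r
  · simp [hTstar] at ha
  have h4 : (4 : R) = 0 := by exact_mod_cast CharP.cast_eq_zero R 4
  have h2 : (2 : R) ≠ 0 := by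
    intro h
    have := (CharP.cast_eq_zero_iff R 4 2).mp (by exact_mod_cast h)
    norm_num at this
  have hT : ∀ t ∈ Tstar, t ^ 2 ^ (n + 1) = t := by
    simp only [hTstar, mem_image, forall_exists_index, and_imp, forall_apply_eq_imp_iff₂]
    intro i _
    simpa using congrArg Units.val
      (pow_pow_eq_self_of_orderOf_dvd Nat.one_le_two_pow hξ.dvd i)
  rw [sumCount_add_eq_card_pair h4 h2 hmax hT ha hb hab0]
  refine ⟨fun hunit => card_pair fun h => ?_, fun hmem _ => ?_⟩
  · obtain rfl : a = b := (Prod.mk.inj h).1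
    exact not_isUnit_two hmax (isUnit_of_mul_isUnit_left (x := 2) (by rwa [two_mul]))
  · obtain rfl : a = b := eq_of_two_dvd_sub_of_pow_two_pow_eq_self h4 (hT a ha) (hT b hb)
      (by rw [show a - b = a + b - 2 * b by ring]
          exact dvd_sub (Ideal.mem_span_singleton.mp hmem) (dvd_mul_right 2 b))
    simp

open scoped Classical in
/-- In `GR(4, r)` with `r ≥ 2`, consider the multiset
`Δ₊T^* = {β + γ : β, γ ∈ T^*, β ≠ -γ}` of sums of elements of the Teichmüller group (all
ordered pairs are counted, since `-γ ∉ T^*` for `γ ∈ T^*`).  Every unit occurring in `Δ₊T^*`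
has multiplicity exactly `2`, and every element of `Δ₊T^*` lying in `I \ {0}` (where
`I = 2·GR(4,r)`) has multiplicity exactly `1`. -/
theorem stmt16 {R : Type*} [CommRing R] [Fintype R] [IsLocalRing R] [DecidableEq R]
    (r : ℕ) (hr : 2 ≤ r)
    (hchar : CharP R 4)
    (hmax : IsLocalRing.maximalIdeal R = Ideal.span {(2 : R)})
    (hcard : Fintype.card R = 4 ^ r)
    (ξ : Rˣ) (hξ : orderOf ξ = 2 ^ r - 1)
    (Tstar : Finset R)
    (hTstar : Tstar = (Finset.range (2 ^ r - 1)).image (fun i => (ξ : R) ^ i)) :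
    ∀ x : R, 0 < sumCount Tstar x →
      (IsUnit x → sumCount Tstar x = 2) ∧
      (x ∈ Ideal.span {(2 : R)} → x ≠ 0 → sumCount Tstar x = 1) :=
  stmt16_general r hchar hmax ξ hξ Tstar hTstar
end

section
/- Let p be an odd prime and R = GR(p^2, r) with Teichmüller group T^*. Then T^* = -T^*, and for any d ∈ ΔT^*: the multiplicity of d in the multiset ΔT^* is odd if and only if d ∈ 2T^* = {2α : α ∈ T^*}. -/
/-!
The map `(a, b) ↦ (-b, -a)` is an involution on the representations `d = a - b` with
`a ≠ b` in `T^*`, because `-1 ∈ T^*`. So the multiplicity of `d` has the parity of the number of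
fixed points, which are the pairs `(α, -α)` with `2α = d`. Since `2` is a unit of `R`, there is
at most one such `α`.

`-1 ∈ T^*`: the element of order two in the cyclic group `T^*` of even order `p^r - 1` is a square
root of `1` different from `1`, and in a local ring where `2` is a unit the only square roots of
`1` are `±1`.
-/

open Finset

namespace Finset

variable {α : Type*} (s : Finset α) (g : α → α)

theorem even_card_of_involution (hg : ∀ a ∈ s, g a ∈ s) (hgg : ∀ a ∈ s, g (g a) = a)
    (hfree : ∀ a ∈ s, g a ≠ a) : Even s.card := by
  have hsum : ∑ _a ∈ s, (1 : ZMod 2) = 0 :=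
    sum_involution (fun a _ => g a) (fun _ _ => by decide) (fun a ha _ => hfree a ha) hg hgg
  rw [sum_const, nsmul_one, ZMod.natCast_eq_zero_iff] at hsum
  exact even_iff_two_dvd.mpr hsum

theorem odd_card_iff_odd_card_filter_fixed [DecidableEq α] (hg : ∀ a ∈ s, g a ∈ s)
    (hgg : ∀ a ∈ s, g (g a) = a) : Odd s.card ↔ Odd (s.filter (fun a => g a = a)).card := by
  have hmoved : Even (s.filter (fun a => g a ≠ a)).card := by
    refine even_card_of_involution _ g (fun a ha => ?_) (fun a ha => hgg a (mem_filter.1 ha).1)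
      (fun a ha => (mem_filter.1 ha).2)
    obtain ⟨has, hne⟩ := mem_filter.1 ha
    exact mem_filter.2 ⟨hg a has, fun h => hne (by rw [← h, hgg a has])⟩
  rw [← card_filter_add_card_filter_not (fun a => g a = a), Nat.odd_add]
  exact iff_true_right hmoved

theorem odd_card_filter_eq_iff_mem_image {β : Type*} [DecidableEq β] {f : α → β}
    (hf : Function.Injective f) (b : β) : Odd (s.filter (f · = b)).card ↔ b ∈ s.image f := by
  have hle : (s.filter (f · = b)).card ≤ 1 :=
    card_le_one.2 fun a ha a' ha' => hf <| (mem_filter.1 ha).2.trans (mem_filter.1 ha').2.symm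
  rw [← fiber_nonempty_iff_mem_image, ← card_pos]
  interval_cases (s.filter (f · = b)).card <;> decide

end Finset

section DiffCount

variable {G : Type*} [AddCommGroup G] [DecidableEq G] {A : Finset G} {d : G}

def diffPairs (A : Finset G) (d : G) : Finset (G × G) :=
  (A ×ˢ A).filter (fun q => q.1 ≠ q.2 ∧ q.1 - q.2 = d)

theorem mem_diffPairs {a b : G} :
    (a, b) ∈ diffPairs A d ↔ a ∈ A ∧ b ∈ A ∧ a ≠ b ∧ a - b = d := by
  simp only [diffPairs, mem_filter, mem_product, and_assoc]

theorem card_diffPairs (A : Finset G) (d : G) : (diffPairs A d).card = diffCount A d := rfl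

theorem diffCount_zero (A : Finset G) : diffCount A 0 = 0 := by
  simp [diffCount, sub_eq_zero]

theorem neg_swap_mem_diffPairs (hA : ∀ a ∈ A, -a ∈ A) {a b : G} (h : (a, b) ∈ diffPairs A d) :
    (-b, -a) ∈ diffPairs A d := by
  obtain ⟨ha, hb, hne, hab⟩ := mem_diffPairs.1 h
  exact mem_diffPairs.2 ⟨hA b hb, hA a ha, fun h => hne (neg_inj.1 h).symm, by rw [← hab]; abel⟩

theorem filter_diffPairs_neg_swap_eq_self (hA : ∀ a ∈ A, -a ∈ A) (hd : d ≠ 0) :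
    (diffPairs A d).filter (fun q => (-q.2, -q.1) = q) =
      (A.filter (2 • · = d)).image fun a => (a, -a) := by
  ext ⟨a, b⟩
  simp only [mem_filter, mem_diffPairs, mem_image, Prod.mk.injEq]
  constructor
  · rintro ⟨⟨ha, -, -, hab⟩, rfl, -⟩
    exact ⟨-b, ⟨ha, by rw [← hab]; abel⟩, rfl, neg_neg b⟩
  · rintro ⟨a, ⟨ha, rfl⟩, rfl, rfl⟩
    refine ⟨⟨ha, hA a ha, fun h => hd ?_, by abel⟩, neg_neg a, rfl⟩
    rw [two_nsmul]
    nth_rw 2 [h]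
    exact add_neg_cancel a

theorem odd_diffCount_iff (hA : ∀ a ∈ A, -a ∈ A) (h2 : Function.Injective (2 • · : G → G))
    (hd : d ≠ 0) : Odd (diffCount A d) ↔ d ∈ A.image (2 • ·) := by
  rw [← card_diffPairs, odd_card_iff_odd_card_filter_fixed _ (fun q => (-q.2, -q.1))
      (fun _ => neg_swap_mem_diffPairs hA) (fun _ _ => by simp only [neg_neg]),
    filter_diffPairs_neg_swap_eq_self hA hd,
    card_image_of_injective _ fun a b h => congrArg Prod.fst h,
    odd_card_filter_eq_iff_mem_image _ h2]

end DiffCount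

section LocalRing

variable {R : Type*} [CommRing R] [IsLocalRing R]

theorem IsLocalRing.eq_one_or_eq_neg_one_of_sq_eq_one (h2 : IsUnit (2 : R)) {y : R}
    (hy : y ^ 2 = 1) : y = 1 ∨ y = -1 := by
  have hprod : (y - 1) * (y + 1) = 0 := by linear_combination hy
  have hsum : IsUnit ((y + 1) + (1 - y)) := by convert h2 using 1; ring
  rcases isUnit_or_isUnit_of_isUnit_add hsum with hu | hu
  · exact .inl (sub_eq_zero.1 (hu.mul_left_eq_zero.1 hprod))
  · have hu' : IsUnit (y - 1) := by simpa only [neg_sub] using hu.neg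
    exact .inr (eq_neg_of_add_eq_zero_left (hu'.mul_right_eq_zero.1 hprod))

theorem IsLocalRing.neg_one_mem_powers (h2 : IsUnit (2 : R)) {g : R} (hg : IsOfFinOrder g)
    (heven : Even (orderOf g)) : (-1 : R) ∈ Submonoid.powers g := by
  obtain ⟨k, hk⟩ := heven
  have hk0 : k ≠ 0 := by have := hg.orderOf_pos; omega
  have hsq : (g ^ k) ^ 2 = 1 := by rw [← pow_mul, mul_two, ← hk, pow_orderOf_eq_one]
  have hne : g ^ k ≠ 1 := pow_ne_one_of_lt_orderOf hk0 (by omega)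
  exact ⟨k, (eq_one_or_eq_neg_one_of_sq_eq_one h2 hsq).resolve_left hne⟩

end LocalRing

theorem mem_image_range_orderOf_iff_mem_powers {M : Type*} [Monoid M] [DecidableEq M] {g x : M}
    (hg : IsOfFinOrder g) :
    x ∈ (range (orderOf g)).image (g ^ ·) ↔ x ∈ Submonoid.powers g :=
  (mem_range_iff_mem_finset_range_of_mod_eq' hg.orderOf_pos (pow_mod_orderOf g)).symm

theorem stmt17_general {R : Type*} [CommRing R] [IsLocalRing R] [DecidableEq R]
    (p r : ℕ) (hp : p.Prime) (hodd : Odd p) (hr : 1 ≤ r)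
    (hchar : CharP R (p ^ 2))
    (ξ : Rˣ) (hξ : orderOf ξ = p ^ r - 1)
    (Tstar : Finset R)
    (hTstar : Tstar = (Finset.range (p ^ r - 1)).image (fun i => (ξ : R) ^ i)) :
    (Tstar.image (fun t => -t) = Tstar) ∧
    (∀ d : R, 0 < diffCount Tstar d →
      (Odd (diffCount Tstar d) ↔ d ∈ Tstar.image (fun t => 2 * t))) := by
  have h2 : IsUnit (2 : R) := by
    let := invertibleOfCoprime (R := R) (p := p ^ 2)
      (Nat.Coprime.pow_right 2 (Nat.coprime_two_left.2 hodd))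
    simpa using isUnit_of_invertible ((2 : ℕ) : R)
  have hord : orderOf (ξ : R) = p ^ r - 1 := by rw [orderOf_units, hξ]
  have hpr : 1 < p ^ r := Nat.one_lt_pow (by omega) hp.one_lt
  have hfin : IsOfFinOrder (ξ : R) := orderOf_pos_iff.1 (by omega)
  have hneg1 : (-1 : R) ∈ Submonoid.powers (ξ : R) :=
    IsLocalRing.neg_one_mem_powers h2 hfin (hord ▸ Nat.Odd.sub_odd hodd.pow odd_one)
  have hneg : ∀ a ∈ Tstar, -a ∈ Tstar := fun a ha => by
    rw [hTstar, ← hord, mem_image_range_orderOf_iff_mem_powers hfin] at ha ⊢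
    simpa using mul_mem hneg1 ha
  refine ⟨eq_of_subset_of_card_le (image_subset_iff.2 hneg)
    (card_image_of_injective _ neg_injective).ge, fun d hd => ?_⟩
  have hd0 : d ≠ 0 := by rintro rfl; simp [diffCount_zero] at hd
  have h2inj : Function.Injective (2 • · : R → R) := fun x y h =>
    h2.mul_left_cancel (by simpa only [nsmul_eq_mul, Nat.cast_ofNat] using h)
  simpa only [nsmul_eq_mul, Nat.cast_ofNat] using odd_diffCount_iff hneg h2inj hd0

/-- Let `p` be an odd prime and `R = GR(p², r)` with Teichmüller group `T^*`.
Then `T^* = -T^*`, and for any `d` occurring in the multiset `ΔT^*`, the multiplicity of `d`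
in `ΔT^*` is odd if and only if `d ∈ 2T^* = {2α : α ∈ T^*}`. -/
theorem stmt17 {R : Type*} [CommRing R] [Fintype R] [IsLocalRing R] [DecidableEq R]
    (p r : ℕ) (hp : p.Prime) (hodd : Odd p) (hr : 1 ≤ r)
    (hchar : CharP R (p ^ 2))
    (hmax : IsLocalRing.maximalIdeal R = Ideal.span {(p : R)})
    (hcard : Fintype.card R = p ^ (2 * r))
    (ξ : Rˣ) (hξ : orderOf ξ = p ^ r - 1)
    (Tstar : Finset R)
    (hTstar : Tstar = (Finset.range (p ^ r - 1)).image (fun i => (ξ : R) ^ i)) :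
    (Tstar.image (fun t => -t) = Tstar) ∧
    (∀ d : R, 0 < diffCount Tstar d →
      (Odd (diffCount Tstar d) ↔ d ∈ Tstar.image (fun t => 2 * t))) :=
  stmt17_general p r hp hodd hr hchar ξ hξ Tstar hTstar
end
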